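/- arXiv:1710.02352 — 5 statements merged into one kernel-verified Lean document; each statement's English description precedes it below -/
import Mathlib

section
/- Let S = {1/n : n ≥ 1} ∪ {0} with the metric inherited from ℝ, and let T : S → S be defined by T(0) = T(1) = 0 and T(1/n) = 1/(n-1) for n ≥ 2. Then the Markov operator P on Borel probability measures on S given by pushforward along T is asymptotically stable (the Dirac measure δ₀ is its unique invariant measure and Pⁿμ → δ₀ weakly for every probability measure μ), but P does not satisfy the e-property at the point 0; i.e., there exists a bounded Lipschitz function f on S such that limsup_{x→0} limsup_{n→∞} |Uⁿf(x) − Uⁿf(0)| > 0, where U is the dual operator (Uⁿf = f ∘ Tⁿ). -/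
/-!
Every orbit of `T` reaches the fixed point `0` after finitely many steps, since `T` shifts
`1/(m+1)` down to `1` in `m` steps and then sends `1` to `0`. Dominated convergence therefore
gives `∫ g ∘ Tⁿ dμ → g 0` for every bounded measurable `g`, and applied to indicators this forces
every invariant probability measure to be `δ₀`. The e-property fails because the points
`1/(m+1) → 0` are all carried to `1` at time `m`, while `0` stays put.
-/

open MeasureTheory Filter Topology

section Orbits

variable {X : Type*} {T : X → X} {z : X} {a : ℕ → X}

theorem iterate_apply_eq_apply_zero (hsucc : ∀ n, T (a (n + 1)) = a n) (m : ℕ) :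
    T^[m] (a m) = a 0 := by
  induction m with
  | zero => rfl
  | succ m ih => rw [Function.iterate_succ_apply, hsucc, ih]

theorem iterate_apply_eq_of_lt (hfix : T z = z) (hzero : T (a 0) = z)
    (hsucc : ∀ n, T (a (n + 1)) = a n) {m n : ℕ} (hmn : m < n) : T^[n] (a m) = z := by
  obtain ⟨k, rfl⟩ := Nat.exists_eq_add_of_lt hmn
  rw [show m + k + 1 = k + (m + 1) by omega, Function.iterate_add_apply,
    Function.iterate_succ_apply', iterate_apply_eq_apply_zero hsucc, hzero,
    Function.iterate_fixed hfix]

theorem eventually_iterate_eq (hcover : ∀ x, x = z ∨ ∃ m, x = a m) (hfix : T z = z)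
    (hzero : T (a 0) = z) (hsucc : ∀ n, T (a (n + 1)) = a n) (x : X) :
    ∀ᶠ n in atTop, T^[n] x = z := by
  rcases hcover x with rfl | ⟨m, rfl⟩
  · exact Eventually.of_forall (Function.iterate_fixed hfix)
  · filter_upwards [eventually_gt_atTop m] with n hn
    exact iterate_apply_eq_of_lt hfix hzero hsucc hn

end Orbits

section Measures

variable {X : Type*} [MeasurableSpace X] {T : X → X} {z : X}

theorem tendsto_integral_map_iterate (hT : Measurable T) (horb : ∀ x, ∀ᶠ n in atTop, T^[n] x = z)
    (μ : Measure X) [IsProbabilityMeasure μ] {g : X → ℝ} (hg : Measurable g)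
    (hgb : ∃ C, ∀ x, |g x| ≤ C) :
    Tendsto (fun n => ∫ x, g x ∂(Measure.map (T^[n]) μ)) atTop (𝓝 (g z)) := by
  obtain ⟨C, hC⟩ := hgb
  have hlim : ∀ x, Tendsto (fun n => g (T^[n] x)) atTop (𝓝 (g z)) := fun x =>
    tendsto_const_nhds.congr' <| (horb x).mono fun n hn => congrArg g hn.symm
  have h := tendsto_integral_of_dominated_convergence (fun _ => C)
    (fun n => (hg.comp (hT.iterate n)).aestronglyMeasurable) (integrable_const (μ := μ) C)
    (fun n => Eventually.of_forall fun x => hC _) (Eventually.of_forall hlim)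
  simp only [integral_const, probReal_univ, one_smul, Function.comp_apply] at h
  simpa only [integral_map (hT.iterate _).aemeasurable hg.aestronglyMeasurable] using h

theorem eq_dirac_of_map_eq (hT : Measurable T) (horb : ∀ x, ∀ᶠ n in atTop, T^[n] x = z)
    (μ : Measure X) [IsProbabilityMeasure μ] (hμ : Measure.map T μ = μ) :
    μ = Measure.dirac z := by
  ext s hs
  have hpres : MeasurePreserving T μ μ := ⟨hT, hμ⟩
  have hbound : ∃ C, ∀ x, |s.indicator (1 : X → ℝ) x| ≤ C :=
    ⟨1, fun x => by by_cases hx : x ∈ s <;> simp [hx]⟩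
  have h := tendsto_integral_map_iterate hT horb μ (measurable_one.indicator hs) hbound
  simp only [(hpres.iterate _).map_eq, integral_indicator_one hs] at h
  have hreal := tendsto_nhds_unique tendsto_const_nhds h
  rw [Measure.dirac_apply' _ hs, ← ENNReal.ofReal_toReal (measure_ne_top μ s)]
  by_cases hz : z ∈ s <;> simp_all [measureReal_def]

end Measures

theorem not_forall_abs_iterate_sub_le {X : Type*} [PseudoMetricSpace X] {T : X → X} {z w : X}
    {a : ℕ → X} {f : X → ℝ} (ha : Tendsto a atTop (𝓝 z)) (hfix : T z = z)
    (hw : ∀ m, T^[m] (a m) = w) (hf : f w ≠ f z) :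
    ¬ ∀ ε > (0 : ℝ), ∃ δ > (0 : ℝ), ∀ x : X, dist x z < δ →
      ∀ n : ℕ, |f (T^[n] x) - f (T^[n] z)| ≤ ε := by
  intro hequi
  have hgap : 0 < |f w - f z| := abs_pos.2 (sub_ne_zero.2 hf)
  obtain ⟨δ, hδ, hclose⟩ := hequi (|f w - f z| / 2) (half_pos hgap)
  obtain ⟨m, hm⟩ := (ha.eventually (Metric.ball_mem_nhds z hδ)).exists
  have h := hclose (a m) hm m
  rw [hw, Function.iterate_fixed hfix] at h
  linarith

section InvNat

variable {S : Set ℝ}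

theorem exists_seq_val_eq_one_div_succ
    (hS : S = {0} ∪ {x : ℝ | ∃ n : ℕ, 1 ≤ n ∧ x = 1 / (n : ℝ)}) :
    ∃ a : ℕ → S, ∀ m, (a m : ℝ) = 1 / ((m : ℝ) + 1) :=
  ⟨fun m => ⟨1 / ((m : ℝ) + 1), hS ▸ Or.inr ⟨m + 1, by omega, by push_cast; rfl⟩⟩, fun _ => rfl⟩

theorem eq_or_exists_eq_seq (hS : S = {0} ∪ {x : ℝ | ∃ n : ℕ, 1 ≤ n ∧ x = 1 / (n : ℝ)})
    {z : S} (hz : (z : ℝ) = 0) {a : ℕ → S} (ha : ∀ m, (a m : ℝ) = 1 / ((m : ℝ) + 1)) (x : S) :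
    x = z ∨ ∃ m, x = a m := by
  have hx : (x : ℝ) ∈ ({0} ∪ {x : ℝ | ∃ n : ℕ, 1 ≤ n ∧ x = 1 / (n : ℝ)} : Set ℝ) := hS ▸ x.2
  rcases hx with hx | ⟨n, hn, hx⟩
  · exact Or.inl (Subtype.ext (hx.trans hz.symm))
  · obtain ⟨m, rfl⟩ := Nat.exists_eq_add_of_le' hn
    exact Or.inr ⟨m, Subtype.ext (by rw [hx, ha]; push_cast; rfl)⟩

theorem abs_val_le_one (hS : S = {0} ∪ {x : ℝ | ∃ n : ℕ, 1 ≤ n ∧ x = 1 / (n : ℝ)}) (x : S) :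
    |(x : ℝ)| ≤ 1 := by
  have hx : (x : ℝ) ∈ ({0} ∪ {x : ℝ | ∃ n : ℕ, 1 ≤ n ∧ x = 1 / (n : ℝ)} : Set ℝ) := hS ▸ x.2
  rcases hx with hx | ⟨n, hn, hx⟩
  · simp [Set.mem_singleton_iff.1 hx]
  · rw [hx, abs_of_nonneg (by positivity)]
    exact div_le_one_of_le₀ (by exact_mod_cast hn) (by positivity)

theorem apply_seq_succ {T : S → S}
    (hTn : ∀ n : ℕ, 2 ≤ n → ∀ x : S, (x : ℝ) = 1 / (n : ℝ) → ((T x : ℝ) = 1 / ((n : ℝ) - 1)))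
    {a : ℕ → S} (ha : ∀ m, (a m : ℝ) = 1 / ((m : ℝ) + 1)) (n : ℕ) :
    T (a (n + 1)) = a n := by
  apply Subtype.ext
  rw [hTn (n + 2) (by omega) _ (by rw [ha]; push_cast; ring), ha]
  push_cast
  ring

end InvNat

/-- Example 1 of the paper: on `S = {1/n : n ≥ 1} ∪ {0} ⊆ ℝ`, the map with `T(0) = T(1) = 0`
and `T(1/n) = 1/(n-1)` for `n ≥ 2` induces a pushforward Markov operator which is
asymptotically stable (with unique invariant measure `δ₀`), yet fails the e-property at `0`:
there is a bounded Lipschitz `f` such that the family `{Uⁿf = f ∘ Tⁿ : n ∈ ℕ}` is not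
equicontinuous at `0`. -/
theorem stmt0
    (Sset : Set ℝ)
    (hS : Sset = {0} ∪ {x : ℝ | ∃ n : ℕ, 1 ≤ n ∧ x = 1 / (n : ℝ)})
    [MeasurableSpace ↥Sset] [BorelSpace ↥Sset]
    (T : ↥Sset → ↥Sset) (hTm : Measurable T)
    (hT0 : ∀ x : ↥Sset, (x : ℝ) = 0 → ((T x : ℝ) = 0))
    (hT1 : ∀ x : ↥Sset, (x : ℝ) = 1 → ((T x : ℝ) = 0))
    (hTn : ∀ n : ℕ, 2 ≤ n → ∀ x : ↥Sset, (x : ℝ) = 1 / (n : ℝ) →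
      ((T x : ℝ) = 1 / ((n : ℝ) - 1))) :
    -- asymptotic stability: δ₀ is the unique invariant probability measure and
    -- `Pⁿμ → δ₀` weakly for every probability measure μ
    (∀ z : ↥Sset, (z : ℝ) = 0 →
      (Measure.map T (Measure.dirac z) = Measure.dirac z) ∧
      (∀ μ : Measure ↥Sset, IsProbabilityMeasure μ → Measure.map T μ = μ →
        μ = Measure.dirac z) ∧
      (∀ μ : Measure ↥Sset, IsProbabilityMeasure μ →
        ∀ g : ↥Sset → ℝ, Continuous g → (∃ C, ∀ x, |g x| ≤ C) →
          Tendsto (fun n => ∫ x, g x ∂ (Measure.map (T^[n]) μ)) atTop (𝓝 (g z)))) ∧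
    -- failure of the e-property at 0: some bounded Lipschitz f for which the iterates
    -- `Uⁿf = f ∘ Tⁿ` are not equicontinuous at 0
    (∃ f : ↥Sset → ℝ, (∃ K, LipschitzWith K f) ∧ (∃ C, ∀ x, |f x| ≤ C) ∧
      ∀ z : ↥Sset, (z : ℝ) = 0 →
        ¬ (∀ ε > (0 : ℝ), ∃ δ > (0 : ℝ), ∀ x : ↥Sset, dist x z < δ →
            ∀ n : ℕ, |f (T^[n] x) - f (T^[n] z)| ≤ ε)) := by
  obtain ⟨a, ha⟩ := exists_seq_val_eq_one_div_succ hS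
  have hsucc := apply_seq_succ hTn ha
  have hfix : ∀ z : Sset, (z : ℝ) = 0 → T z = z := fun z hz =>
    Subtype.ext (by rw [hT0 z hz, hz])
  refine ⟨fun z hz => ?_, Subtype.val, ⟨1, LipschitzWith.subtype_val Sset⟩,
    ⟨1, abs_val_le_one hS⟩, fun z hz => ?_⟩
  · have hzero : T (a 0) = z := Subtype.ext (by rw [hT1 _ (by simp [ha]), hz])
    have horb :=
      eventually_iterate_eq (eq_or_exists_eq_seq hS hz ha) (hfix z hz) hzero hsucc
    refine ⟨by rw [Measure.map_dirac' hTm, hfix z hz],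
      fun μ _ hμ => eq_dirac_of_map_eq hTm horb μ hμ,
      fun μ _ g hg hgb => tendsto_integral_map_iterate hTm horb μ hg.measurable hgb⟩
  · have ha_lim : Tendsto a atTop (𝓝 z) := tendsto_subtype_rng.2 <| by
      simpa [ha, hz] using tendsto_one_div_add_atTop_nhds_zero_nat (𝕜 := ℝ)
    exact not_forall_abs_iterate_sub_le ha_lim (hfix z hz)
      (iterate_apply_eq_apply_zero hsucc) (by simp [ha, hz])
end

section
/- Let P be an asymptotically stable Feller Markov operator on a Polish space S with unique invariant probability measure μ*, and let U be its dual operator. If the interior of the support of μ* is nonempty, then for every bounded continuous f : S → ℝ and every ε > 0 there exist an open ball B contained in supp μ* and N ∈ ℕ such that |Uⁿf(x) − Uⁿf(y)| ≤ ε for all x, y ∈ B and all n ≥ N. -/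
open MeasureTheory Filter Metric Topology
open scoped ENNReal

/-! By asymptotic stability applied to Dirac measures, `Uⁿf(x) = ⟨f, Pⁿδₓ⟩ → ⟨f, μ*⟩` for
every `x`. The Feller property makes each `Uⁿf` continuous, so the sets where
`|Uᵐf - ⟨f, μ*⟩| ≤ ε/2` for all `m ≥ n` are closed and cover `S`. Since a Polish space is a
Baire space, one of them has interior meeting the open set `int (supp μ*)`, which gives the
ball. -/

/-- The support of a finite Borel measure on a metric space. -/
def measSupport {S : Type*} [MetricSpace S] [MeasurableSpace S] (μ : MeasureTheory.Measure S) :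
    Set S :=
  {x : S | ∀ r > 0, 0 < μ (Metric.ball x r)}

theorem exists_ball_subset_forall_ge_dist_le {X Y : Type*} [PseudoMetricSpace X] [BaireSpace X]
    [PseudoMetricSpace Y] {g : ℕ → X → Y} {c : Y}
    (hg : ∀ n, Continuous (g n)) (hlim : ∀ x, Tendsto (fun n => g n x) atTop (𝓝 c))
    {W : Set X} (hW : IsOpen W) (hWne : W.Nonempty) {ε : ℝ} (hε : 0 < ε) :
    ∃ (z : X) (r : ℝ) (N : ℕ), 0 < r ∧ ball z r ⊆ W ∧
      ∀ x ∈ ball z r, ∀ n ≥ N, dist (g n x) c ≤ ε := by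
  set F : ℕ → Set X := fun N => ⋂ n ≥ N, {x | dist (g n x) c ≤ ε}
  have hF_closed : ∀ N, IsClosed (F N) := fun N =>
    isClosed_biInter fun n _ => isClosed_le ((hg n).dist continuous_const) continuous_const
  have hF_cover : ⋃ N, F N = Set.univ := by
    refine Set.eq_univ_of_forall fun x => Set.mem_iUnion.2 ?_
    obtain ⟨N, hN⟩ := eventually_atTop.1 ((hlim x).eventually (closedBall_mem_nhds c hε))
    exact ⟨N, Set.mem_iInter₂.2 hN⟩
  obtain ⟨x, hxW, hxF⟩ :=
    (dense_iUnion_interior_of_closed hF_closed hF_cover).inter_open_nonempty W hW hWne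
  obtain ⟨N, hxN⟩ := Set.mem_iUnion.1 hxF
  obtain ⟨r, hr, hball⟩ := isOpen_iff.1 (hW.inter isOpen_interior) x ⟨hxW, hxN⟩
  refine ⟨x, r, N, hr, fun y hy => (hball hy).1, fun y hy n hn => ?_⟩
  exact Set.mem_iInter₂.1 (interior_subset (hball hy).2) n hn

section DualIterate

variable {S : Type*} [MeasurableSpace S] {U : (S → ℝ) → (S → ℝ)} {f : S → ℝ} {C : ℝ}

theorem measurable_iterate_and_abs_le
    (hU : ∀ (g : S → ℝ) (C : ℝ), Measurable g → (∀ x, |g x| ≤ C) →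
      Measurable (U g) ∧ ∀ x, |U g x| ≤ C)
    (hfm : Measurable f) (hfC : ∀ x, |f x| ≤ C) (n : ℕ) :
    Measurable (U^[n] f) ∧ ∀ x, |U^[n] f x| ≤ C := by
  induction n with
  | zero => exact ⟨hfm, hfC⟩
  | succ n ih =>
    rw [Function.iterate_succ_apply']
    exact hU _ C ih.1 ih.2

theorem continuous_iterate_of_feller [TopologicalSpace S]
    (hU : ∀ (g : S → ℝ) (C : ℝ), Measurable g → (∀ x, |g x| ≤ C) →
      Measurable (U g) ∧ ∀ x, |U g x| ≤ C)
    (hFeller : ∀ g : S → ℝ, Continuous g → (∃ C, ∀ x, |g x| ≤ C) → Continuous (U g))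
    (hfc : Continuous f) (hfm : Measurable f) (hfC : ∀ x, |f x| ≤ C) (n : ℕ) :
    Continuous (U^[n] f) := by
  induction n with
  | zero => exact hfc
  | succ n ih =>
    rw [Function.iterate_succ']
    exact hFeller _ ih ⟨C, (measurable_iterate_and_abs_le hU hfm hfC n).2⟩

theorem integral_iterate_eq_integral_dual_iterate {P : Measure S → Measure S}
    (hU : ∀ (g : S → ℝ) (C : ℝ), Measurable g → (∀ x, |g x| ≤ C) →
      Measurable (U g) ∧ ∀ x, |U g x| ≤ C)
    (hdual : ∀ g : S → ℝ, Measurable g → (∃ C, ∀ x, |g x| ≤ C) →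
      ∀ μ : Measure S, ∫ x, g x ∂ (P μ) = ∫ x, U g x ∂ μ)
    (hfm : Measurable f) (hfC : ∀ x, |f x| ≤ C) (n : ℕ) (μ : Measure S) :
    ∫ x, f x ∂ (P^[n] μ) = ∫ x, U^[n] f x ∂ μ := by
  induction n generalizing μ with
  | zero => rfl
  | succ n ih =>
    obtain ⟨hm, hb⟩ := measurable_iterate_and_abs_le hU hfm hfC n
    rw [Function.iterate_succ_apply, ih, hdual _ hm ⟨C, hb⟩, Function.iterate_succ_apply']

end DualIterate

theorem stmt2_general {S : Type*} [MetricSpace S] [PolishSpace S] [MeasurableSpace S] [BorelSpace S]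
    (P : Measure S → Measure S)
    (U : (S → ℝ) → (S → ℝ))
    (hU : ∀ (g : S → ℝ) (C : ℝ), Measurable g → (∀ x, |g x| ≤ C) →
      Measurable (U g) ∧ ∀ x, |U g x| ≤ C)
    (hdual : ∀ g : S → ℝ, Measurable g → (∃ C, ∀ x, |g x| ≤ C) →
      ∀ μ : Measure S, ∫ x, g x ∂ (P μ) = ∫ x, U g x ∂ μ)
    (hFeller : ∀ g : S → ℝ, Continuous g → (∃ C, ∀ x, |g x| ≤ C) → Continuous (U g))
    (μstar : Measure S)
    (hstab : ∀ μ : Measure S, IsProbabilityMeasure μ →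
      ∀ g : S → ℝ, Continuous g → (∃ C, ∀ x, |g x| ≤ C) →
        Tendsto (fun n => ∫ x, g x ∂ (P^[n] μ)) atTop (𝓝 (∫ x, g x ∂ μstar)))
    (hint : (interior (measSupport μstar)).Nonempty)
    (f : S → ℝ) (hfc : Continuous f) (hfb : ∃ C, ∀ x, |f x| ≤ C)
    (ε : ℝ) (hε : 0 < ε) :
    ∃ (z : S) (r : ℝ) (N : ℕ), 0 < r ∧ Metric.ball z r ⊆ measSupport μstar ∧
      ∀ x ∈ Metric.ball z r, ∀ y ∈ Metric.ball z r, ∀ n ≥ N,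
        |U^[n] f x - U^[n] f y| ≤ ε := by
  obtain ⟨C, hfC⟩ := hfb
  have hfm : Measurable f := hfc.measurable
  set c := ∫ y, f y ∂ μstar
  have hlim : ∀ x, Tendsto (fun n => U^[n] f x) atTop (𝓝 c) := fun x => by
    have hdirac : ∀ n, ∫ y, f y ∂ (P^[n] (Measure.dirac x)) = U^[n] f x := fun n => by
      rw [integral_iterate_eq_integral_dual_iterate hU hdual hfm hfC,
        integral_dirac' _ _ (measurable_iterate_and_abs_le hU hfm hfC n).1.stronglyMeasurable]
    simpa only [hdirac] using hstab (Measure.dirac x) inferInstance f hfc ⟨C, hfC⟩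
  obtain ⟨z, r, N, hr, hball, hclose⟩ := exists_ball_subset_forall_ge_dist_le
    (continuous_iterate_of_feller hU hFeller hfc hfm hfC) hlim isOpen_interior hint (half_pos hε)
  refine ⟨z, r, N, hr, hball.trans interior_subset, fun x hx y hy n hn => ?_⟩
  calc |U^[n] f x - U^[n] f y| = dist (U^[n] f x) (U^[n] f y) := (Real.dist_eq _ _).symm
    _ ≤ dist (U^[n] f x) c + dist (U^[n] f y) c := dist_triangle_right _ _ _
    _ ≤ ε / 2 + ε / 2 := add_le_add (hclose x hx n hn) (hclose y hy n hn)
    _ = ε := add_halves ε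

/-- Lemma 1 of the paper: for an asymptotically stable Feller Markov operator whose invariant
measure has support with nonempty interior, the iterates `Uⁿf` become uniformly almost constant
on some ball inside the support. -/
theorem stmt2 {S : Type*} [MetricSpace S] [PolishSpace S] [MeasurableSpace S] [BorelSpace S]
    (P : Measure S → Measure S)
    (hadd : ∀ μ ν : Measure S, P (μ + ν) = P μ + P ν)
    (hsmul : ∀ (c : ℝ≥0∞) (μ : Measure S), P (c • μ) = c • P μ)
    (hmass : ∀ μ : Measure S, P μ Set.univ = μ Set.univ)
    (U : (S → ℝ) → (S → ℝ))
    (hU : ∀ (g : S → ℝ) (C : ℝ), Measurable g → (∀ x, |g x| ≤ C) →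
      Measurable (U g) ∧ ∀ x, |U g x| ≤ C)
    (hdual : ∀ g : S → ℝ, Measurable g → (∃ C, ∀ x, |g x| ≤ C) →
      ∀ μ : Measure S, ∫ x, g x ∂ (P μ) = ∫ x, U g x ∂ μ)
    (hFeller : ∀ g : S → ℝ, Continuous g → (∃ C, ∀ x, |g x| ≤ C) → Continuous (U g))
    (μstar : Measure S) [IsProbabilityMeasure μstar] (hinv : P μstar = μstar)
    (huniq : ∀ μ : Measure S, IsProbabilityMeasure μ → P μ = μ → μ = μstar)
    (hstab : ∀ μ : Measure S, IsProbabilityMeasure μ →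
      ∀ g : S → ℝ, Continuous g → (∃ C, ∀ x, |g x| ≤ C) →
        Tendsto (fun n => ∫ x, g x ∂ (P^[n] μ)) atTop (𝓝 (∫ x, g x ∂ μstar)))
    (hint : (interior (measSupport μstar)).Nonempty)
    (f : S → ℝ) (hfc : Continuous f) (hfb : ∃ C, ∀ x, |f x| ≤ C)
    (ε : ℝ) (hε : 0 < ε) :
    ∃ (z : S) (r : ℝ) (N : ℕ), 0 < r ∧ Metric.ball z r ⊆ measSupport μstar ∧
      ∀ x ∈ Metric.ball z r, ∀ y ∈ Metric.ball z r, ∀ n ≥ N,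
        |U^[n] f x - U^[n] f y| ≤ ε :=
  stmt2_general P U hU hdual hFeller μstar hstab hint f hfc hfb ε hε
end

section
/- Let S be a compact metric space and P a Feller Markov operator on S with dual U. If for every continuous f : S → ℝ the Cesàro averages (1/n)∑_{k=1}^n Uᵏf converge pointwise to a constant, then the family {(1/n)∑_{k=1}^n Uᵏf : n ∈ ℕ} is equicontinuous for every continuous f; i.e., P satisfies the Cesàro e-property. -/
set_option linter.unusedSectionVars false
set_option maxHeartbeats 1000000

open MeasureTheory Filter Topology



theorem sigma_smooth {S : Type*} [MetricSpace S] [CompactSpace S] (Λ : (S → ℝ) → ℝ)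
    (hadd : ∀ g h : S → ℝ, Continuous g → Continuous h →
      Λ (fun x => g x + h x) = Λ g + Λ h)
    (hmono : ∀ g h : S → ℝ, Continuous g → Continuous h →
      (∀ x, g x ≤ h x) → Λ g ≤ Λ h)
    (hconst : ∀ c : ℝ, Λ (fun _ => c) = c)
    (g : ℕ → S → ℝ) (hgc : ∀ N, Continuous (g N)) (hg0 : ∀ N x, 0 ≤ g N x)
    (K : ℝ) (hgK : ∀ N x, g N x ≤ K)
    (hpt : ∀ x, Tendsto (fun N => g N x) atTop (𝓝 0)) :
    Tendsto (fun N => Λ (g N)) atTop (𝓝 0) := by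
  classical
  -- tail sup
  set tl : ℕ → S → ℝ := fun N x => ⨆ j : ℕ, g (N + j) x with htl
  have bdd : ∀ N x, BddAbove (Set.range fun j => g (N + j) x) := by
    intro N x; exact ⟨K, by rintro _ ⟨j, rfl⟩; exact hgK _ x⟩
  have le_tl : ∀ N j x, g (N + j) x ≤ tl N x := fun N j x => le_ciSup (bdd N x) j
  have le_tl' : ∀ N M, N ≤ M → ∀ x, g M x ≤ tl N x := by
    intro N M hNM x
    have := le_tl N (M - N) x
    rwa [show N + (M - N) = M by omega] at this
  have tl_le : ∀ N x, tl N x ≤ K := fun N x => ciSup_le fun j => hgK _ x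
  have tl0 : ∀ N x, (0:ℝ) ≤ tl N x := fun N x => (hg0 N x).trans (le_tl' N N le_rfl x)
  have tl_succ : ∀ N x, tl (N + 1) x ≤ tl N x := by
    intro N x
    refine ciSup_le fun j => ?_
    have := le_tl N (j + 1) x
    rwa [show N + (j + 1) = N + 1 + j by omega] at this
  -- candidates and their sup
  set cand : ℕ → Set (S → ℝ) :=
    fun N => {φ | Continuous φ ∧ (∀ x, 0 ≤ φ x) ∧ ∀ x, φ x ≤ tl N x} with hcand
  have zero_mem : ∀ N, (fun _ : S => (0:ℝ)) ∈ cand N :=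
    fun N => ⟨continuous_const, fun x => le_rfl, fun x => tl0 N x⟩
  have cand_le : ∀ N φ, φ ∈ cand N → Λ φ ≤ K := by
    intro N φ ⟨hc, h0, hle⟩
    have := hmono φ (fun _ => K) hc continuous_const fun x => (hle x).trans (tl_le N x)
    simpa [hconst K] using this
  set a : ℕ → ℝ := fun N => sSup (Λ '' cand N) with ha
  have bddA : ∀ N, BddAbove (Λ '' cand N) := by
    intro N; exact ⟨K, by rintro _ ⟨φ, hφ, rfl⟩; exact cand_le N φ hφ⟩
  have neA : ∀ N, (Λ '' cand N).Nonempty := fun N => ⟨Λ _, Set.mem_image_of_mem Λ (zero_mem N)⟩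
  have a_nonneg : ∀ N, 0 ≤ a N := by
    intro N
    have h0 : Λ (fun _ : S => (0:ℝ)) = 0 := hconst 0
    have := le_csSup (bddA N) (Set.mem_image_of_mem Λ (zero_mem N))
    rw [h0] at this; exact this
  have gmem : ∀ N M, N ≤ M → g M ∈ cand N := by
    intro N M h
    exact ⟨hgc M, hg0 M, fun x => le_tl' N M h x⟩
  -- key claim
  have key : ∀ ε > (0:ℝ), ∃ N₀, a N₀ ≤ ε := by
    by_contra hcon
    push_neg at hcon
    obtain ⟨ε, hε, hbig⟩ := hcon
    set A' : ℝ := ⨅ N, a N with hA'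
    have hbdd : BddBelow (Set.range a) := ⟨0, by rintro _ ⟨N, rfl⟩; exact a_nonneg N⟩
    have hA'ε : ε ≤ A' := le_ciInf fun N => (hbig N).le
    have hA'pos : 0 < A' := lt_of_lt_of_le hε hA'ε
    have hA'le : ∀ N, A' ≤ a N := fun N => ciInf_le hbdd N
    -- choose near-optimal candidates
    have hchoose : ∀ m : ℕ, ∃ φ, φ ∈ cand m ∧ a m - A' / 8 * (1/2 : ℝ) ^ m < Λ φ := by
      intro m
      have hw : (0:ℝ) < A' / 8 * (1/2 : ℝ) ^ m := by positivity
      have hlt0 : a m - A' / 8 * (1/2:ℝ) ^ m < a m := by linarith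
      obtain ⟨b, hb, hlt⟩ := exists_lt_of_lt_csSup (neA m) hlt0
      obtain ⟨φ, hφ, rfl⟩ := hb
      exact ⟨φ, hφ, hlt⟩
    choose φ hφmem hφgt using hchoose
    -- running minima
    set Φ : ℕ → S → ℝ := fun M => Nat.rec (φ 0) (fun m r => fun x => min (r x) (φ (m+1) x)) M
      with hΦ
    have Φ0 : Φ 0 = φ 0 := rfl
    have Φs : ∀ M, Φ (M + 1) = fun x => min (Φ M x) (φ (M + 1) x) := fun M => rfl
    have Φcont : ∀ M, Continuous (Φ M) := by
      intro M; induction M with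
      | zero => exact (hφmem 0).1
      | succ M ih => rw [Φs]; exact ih.min (hφmem (M+1)).1
    have Φpos : ∀ M x, 0 ≤ Φ M x := by
      intro M; induction M with
      | zero => exact (hφmem 0).2.1
      | succ M ih => intro x; rw [Φs]; exact le_min (ih x) ((hφmem (M+1)).2.1 x)
    have Φle : ∀ M x, Φ M x ≤ φ M x := by
      intro M; induction M with
      | zero => intro x; rw [Φ0]
      | succ M ih => intro x; rw [Φs]; exact min_le_right _ _
    have Φanti : ∀ M x, Φ (M + 1) x ≤ Φ M x := by
      intro M x; rw [Φs]; exact min_le_left _ _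
    have Φtl : ∀ M x, Φ M x ≤ tl M x := fun M x => (Φle M x).trans ((hφmem M).2.2 x)
    -- the max function is a candidate at level M
    have maxmem : ∀ M, (fun x => max (Φ M x) (φ (M + 1) x)) ∈ cand M := by
      intro M
      refine ⟨(Φcont M).max (hφmem (M+1)).1, fun x => le_max_of_le_left (Φpos M x), fun x => ?_⟩
      exact max_le (Φtl M x) (((hφmem (M+1)).2.2 x).trans (tl_succ M x))
    have Λmax_le : ∀ M, Λ (fun x => max (Φ M x) (φ (M + 1) x)) ≤ a M := fun M =>
      le_csSup (bddA M) (Set.mem_image_of_mem Λ (maxmem M))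
    -- min + max = sum
    have Λstep : ∀ M, Λ (Φ (M + 1)) =
        Λ (Φ M) + Λ (φ (M + 1)) - Λ (fun x => max (Φ M x) (φ (M + 1) x)) := by
      intro M
      have e1 : (fun x => Φ (M+1) x + max (Φ M x) (φ (M+1) x)) =
          (fun x => Φ M x + φ (M + 1) x) := by
        funext x
        rw [Φs]
        exact min_add_max _ _
      have h1 := hadd (Φ (M+1)) (fun x => max (Φ M x) (φ (M+1) x)) (Φcont (M+1))
        ((Φcont M).max (hφmem (M+1)).1)
      have h2 := hadd (Φ M) (φ (M+1)) (Φcont M) (hφmem (M+1)).1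
      rw [e1, h2] at h1
      linarith
    -- lower bound by induction
    have lower : ∀ M, a M - A' / 8 * ∑ j ∈ Finset.range (M + 1), (1/2:ℝ) ^ j ≤ Λ (Φ M) := by
      intro M; induction M with
      | zero => simpa [Φ0] using (hφgt 0).le
      | succ M ih =>
        have h1 := Λstep M
        have h2 := Λmax_le M
        have h3 := (hφgt (M+1)).le
        rw [Finset.sum_range_succ, h1, mul_add]
        linarith [ih, h2, h3]
    have lower' : ∀ M, 3/4 * A' ≤ Λ (Φ M) := by
      intro M
      have hsum : ∑ j ∈ Finset.range (M + 1), (1/2:ℝ) ^ j ≤ 2 := by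
        simpa using sum_geometric_two_le (M + 1)
      have := lower M
      have hA := hA'le M
      nlinarith [this, hA, hA'pos]
    -- Cantor intersection
    set Ks : ℕ → Set S := fun M => {x | A' / 2 ≤ Φ M x} with hKs
    by_cases hall : ∀ M, (Ks M).Nonempty
    · have hsub : ∀ M, Ks (M + 1) ⊆ Ks M := by
        intro M x hx
        exact le_trans hx (Φanti M x)
      have hcl : ∀ M, IsClosed (Ks M) := fun M => isClosed_le continuous_const (Φcont M)
      obtain ⟨xs, hxs⟩ := IsCompact.nonempty_iInter_of_sequence_nonempty_isCompact_isClosed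
        Ks hsub hall ((hcl 0).isCompact) hcl
      have hxs' : ∀ M, A' / 2 ≤ Φ M xs := by
        intro M; exact Set.mem_iInter.mp hxs M
      -- but tail sup at xs is eventually small
      obtain ⟨N, hN⟩ := (Metric.tendsto_atTop.mp (hpt xs) (A'/4) (by positivity))
      have htlN : tl N xs ≤ A' / 4 := by
        refine ciSup_le fun j => ?_
        have := hN (N + j) (Nat.le_add_right _ _)
        rw [Real.dist_eq, sub_zero] at this
        exact (le_abs_self _).trans this.le
      have := (hxs' N).trans ((Φtl N xs).trans htlN)
      linarith
    · push_neg at hall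
      obtain ⟨M, hM⟩ := hall
      have hsmall : ∀ x, Φ M x ≤ A' / 2 := by
        intro x
        have hx : x ∉ Ks M := by rw [hM]; exact Set.notMem_empty x
        have hx' : ¬ A' / 2 ≤ Φ M x := hx
        exact (lt_of_not_ge hx').le
      have := hmono (Φ M) (fun _ => A'/2) (Φcont M) continuous_const hsmall
      rw [hconst] at this
      have := lower' M
      linarith
  -- conclude
  rw [Metric.tendsto_atTop]
  intro ε hε
  obtain ⟨N₀, hN₀⟩ := key (ε/2) (by positivity)
  refine ⟨N₀, fun N hN => ?_⟩
  have h1 : Λ (g N) ≤ a N₀ :=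
    le_csSup (bddA N₀) (Set.mem_image_of_mem Λ (gmem N₀ N hN))
  have h2 : 0 ≤ Λ (g N) := by
    have := hmono (fun _ => (0:ℝ)) (g N) continuous_const (hgc N) (hg0 N)
    rwa [hconst] at this
  rw [Real.dist_eq, sub_zero, abs_of_nonneg h2]
  linarith



section JamisonAux

variable {S : Type*} [MetricSpace S] [CompactSpace S]

theorem jamison_iter_cont (U : (S → ℝ) → (S → ℝ))
    (hUcont : ∀ f : S → ℝ, Continuous f → Continuous (U f))
    (k : ℕ) {g : S → ℝ} (hg : Continuous g) : Continuous (U^[k] g) := by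
  induction k with
  | zero => simpa using hg
  | succ k ih => rw [Function.iterate_succ_apply']; exact hUcont _ ih

theorem jamison_iter_add (U : (S → ℝ) → (S → ℝ))
    (hUcont : ∀ f : S → ℝ, Continuous f → Continuous (U f))
    (hUadd : ∀ f g : S → ℝ, Continuous f → Continuous g → U (f + g) = U f + U g)
    (k : ℕ) {g h : S → ℝ} (hg : Continuous g) (hh : Continuous h) :
    U^[k] (g + h) = U^[k] g + U^[k] h := by
  induction k with
  | zero => simp
  | succ k ih =>
      rw [Function.iterate_succ_apply', Function.iterate_succ_apply',
        Function.iterate_succ_apply', ih,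
        hUadd _ _ (jamison_iter_cont U hUcont k hg) (jamison_iter_cont U hUcont k hh)]

theorem jamison_iter_smul (U : (S → ℝ) → (S → ℝ))
    (hUcont : ∀ f : S → ℝ, Continuous f → Continuous (U f))
    (hUsmul : ∀ (c : ℝ) (f : S → ℝ), Continuous f → U (c • f) = c • U f)
    (k : ℕ) (c : ℝ) {g : S → ℝ} (hg : Continuous g) :
    U^[k] (c • g) = c • U^[k] g := by
  induction k with
  | zero => simp
  | succ k ih =>
      rw [Function.iterate_succ_apply', Function.iterate_succ_apply', ih,
        hUsmul _ _ (jamison_iter_cont U hUcont k hg)]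

theorem jamison_iter_one (U : (S → ℝ) → (S → ℝ))
    (hU1 : U (fun _ => 1) = fun _ => 1) (k : ℕ) :
    U^[k] (fun _ => (1:ℝ)) = fun _ => (1:ℝ) := by
  induction k with
  | zero => simp
  | succ k ih => rw [Function.iterate_succ_apply, hU1, ih]

theorem jamison_iter_const (U : (S → ℝ) → (S → ℝ))
    (hUcont : ∀ f : S → ℝ, Continuous f → Continuous (U f))
    (hUsmul : ∀ (c : ℝ) (f : S → ℝ), Continuous f → U (c • f) = c • U f)
    (hU1 : U (fun _ => 1) = fun _ => 1) (k : ℕ) (c : ℝ) :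
    U^[k] (fun _ => c) = fun _ => c := by
  have h1 : (fun _ : S => c) = c • (fun _ : S => (1:ℝ)) := by
    funext x; simp
  rw [h1, jamison_iter_smul U hUcont hUsmul k c continuous_const,
    jamison_iter_one U hU1 k]

theorem jamison_iter_pos (U : (S → ℝ) → (S → ℝ))
    (hUcont : ∀ f : S → ℝ, Continuous f → Continuous (U f))
    (hUpos : ∀ f : S → ℝ, Continuous f → (∀ x, 0 ≤ f x) → ∀ x, 0 ≤ U f x)
    (k : ℕ) {g : S → ℝ} (hg : Continuous g) (h0 : ∀ x, 0 ≤ g x) :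
    ∀ x, 0 ≤ U^[k] g x := by
  induction k with
  | zero => simpa using h0
  | succ k ih =>
      intro x
      rw [Function.iterate_succ_apply']
      exact hUpos _ (jamison_iter_cont U hUcont k hg) ih x

theorem jamison_iter_mono (U : (S → ℝ) → (S → ℝ))
    (hUcont : ∀ f : S → ℝ, Continuous f → Continuous (U f))
    (hUadd : ∀ f g : S → ℝ, Continuous f → Continuous g → U (f + g) = U f + U g)
    (hUsmul : ∀ (c : ℝ) (f : S → ℝ), Continuous f → U (c • f) = c • U f)
    (hUpos : ∀ f : S → ℝ, Continuous f → (∀ x, 0 ≤ f x) → ∀ x, 0 ≤ U f x)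
    (k : ℕ) {g h : S → ℝ} (hg : Continuous g) (hh : Continuous h)
    (hle : ∀ x, g x ≤ h x) : ∀ x, U^[k] g x ≤ U^[k] h x := by
  intro x
  have hd : Continuous (h - g) := hh.sub hg
  have hsplit : h = g + (h - g) := by funext y; simp
  have := jamison_iter_add U hUcont hUadd k hg hd
  rw [← hsplit] at this
  have hpos : 0 ≤ U^[k] (h - g) x :=
    jamison_iter_pos U hUcont hUpos k hd (fun y => by simpa using hle y) x
  have := congrFun this x
  rw [Pi.add_apply] at this
  linarith

theorem jamison_iter_bound (U : (S → ℝ) → (S → ℝ))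
    (hUcont : ∀ f : S → ℝ, Continuous f → Continuous (U f))
    (hUadd : ∀ f g : S → ℝ, Continuous f → Continuous g → U (f + g) = U f + U g)
    (hUsmul : ∀ (c : ℝ) (f : S → ℝ), Continuous f → U (c • f) = c • U f)
    (hUpos : ∀ f : S → ℝ, Continuous f → (∀ x, 0 ≤ f x) → ∀ x, 0 ≤ U f x)
    (hU1 : U (fun _ => 1) = fun _ => 1)
    (k : ℕ) {g : S → ℝ} (hg : Continuous g) {C : ℝ} (hC : ∀ x, |g x| ≤ C) :
    ∀ x, |U^[k] g x| ≤ C := by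
  intro x
  have hup : ∀ y, g y ≤ C := fun y => (le_abs_self _).trans (hC y)
  have hdown : ∀ y, -C ≤ g y := fun y => neg_le_of_abs_le (hC y)
  have h1 := jamison_iter_mono U hUcont hUadd hUsmul hUpos k hg continuous_const hup x
  have h2 := jamison_iter_mono U hUcont hUadd hUsmul hUpos k continuous_const hg hdown x
  rw [jamison_iter_const U hUcont hUsmul hU1 k C] at h1
  rw [jamison_iter_const U hUcont hUsmul hU1 k (-C)] at h2
  exact abs_le.mpr ⟨h2, h1⟩

end JamisonAux




noncomputable def jamisonA {S : Type*} (U : (S → ℝ) → (S → ℝ)) (n : ℕ) (g : S → ℝ) (x : S) :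
    ℝ := (n : ℝ)⁻¹ * ∑ k ∈ Finset.range n, U^[k + 1] g x

section JamisonAvg

variable {S : Type*} [MetricSpace S] [CompactSpace S]
variable (U : (S → ℝ) → (S → ℝ))
variable (hUcont : ∀ f : S → ℝ, Continuous f → Continuous (U f))
variable (hUadd : ∀ f g : S → ℝ, Continuous f → Continuous g → U (f + g) = U f + U g)
variable (hUsmul : ∀ (c : ℝ) (f : S → ℝ), Continuous f → U (c • f) = c • U f)
variable (hUpos : ∀ f : S → ℝ, Continuous f → (∀ x, 0 ≤ f x) → ∀ x, 0 ≤ U f x)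
variable (hU1 : U (fun _ => 1) = fun _ => 1)
include hUcont hUadd hUsmul hUpos hU1

theorem jamisonA_cont (n : ℕ) {g : S → ℝ} (hg : Continuous g) :
    Continuous (jamisonA U n g) := by
  unfold jamisonA
  exact continuous_const.mul
    (continuous_finset_sum _ fun k _ => jamison_iter_cont U hUcont (k+1) hg)

theorem jamisonA_mono (n : ℕ) {g h : S → ℝ} (hg : Continuous g) (hh : Continuous h)
    (hle : ∀ x, g x ≤ h x) : ∀ x, jamisonA U n g x ≤ jamisonA U n h x := by
  intro x
  unfold jamisonA
  have : (0:ℝ) ≤ (n:ℝ)⁻¹ := by positivity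
  apply mul_le_mul_of_nonneg_left _ this
  exact Finset.sum_le_sum fun k _ =>
    jamison_iter_mono U hUcont hUadd hUsmul hUpos (k+1) hg hh hle x

theorem jamisonA_const (n : ℕ) (hn : 1 ≤ n) (c : ℝ) (x : S) :
    jamisonA U (S := S) n (fun _ => c) x = c := by
  unfold jamisonA
  have : ∀ k ∈ Finset.range n, U^[k+1] (fun _ : S => c) x = c := fun k _ => by
    rw [jamison_iter_const U hUcont hUsmul hU1 (k+1) c]
  rw [Finset.sum_congr rfl this, Finset.sum_const, Finset.card_range, nsmul_eq_mul]
  field_simp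

theorem jamisonA_bound (n : ℕ) {g : S → ℝ} (hg : Continuous g) {C : ℝ} (hC0 : 0 ≤ C)
    (hC : ∀ x, |g x| ≤ C) : ∀ x, |jamisonA U n g x| ≤ C := by
  intro x
  unfold jamisonA
  rcases Nat.eq_zero_or_pos n with hn | hn
  · simp [hn, hC0]
  · rw [abs_mul, abs_of_nonneg (by positivity : (0:ℝ) ≤ (n:ℝ)⁻¹)]
    have h1 : |∑ k ∈ Finset.range n, U^[k+1] g x| ≤ (n : ℝ) * C := by
      refine (Finset.abs_sum_le_sum_abs _ _).trans ?_
      have := Finset.sum_le_sum (s := Finset.range n)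
        (fun k _ => jamison_iter_bound U hUcont hUadd hUsmul hUpos hU1 (k+1) hg hC x)
      simpa [Finset.sum_const, Finset.card_range, nsmul_eq_mul] using this
    have hnpos : (0:ℝ) < n := by exact_mod_cast hn
    calc (n:ℝ)⁻¹ * |∑ k ∈ Finset.range n, U^[k+1] g x| ≤ (n:ℝ)⁻¹ * ((n:ℝ) * C) := by
          exact mul_le_mul_of_nonneg_left h1 (by positivity)
      _ = C := by field_simp

theorem jamisonA_add (n : ℕ) {g h : S → ℝ} (hg : Continuous g) (hh : Continuous h) (x : S) :
    jamisonA U n (fun y => g y + h y) x = jamisonA U n g x + jamisonA U n h x := by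
  unfold jamisonA
  have : ∀ k ∈ Finset.range n, U^[k+1] (fun y => g y + h y) x
      = U^[k+1] g x + U^[k+1] h x := by
    intro k _
    have := jamison_iter_add U hUcont hUadd (k+1) hg hh
    have h2 : (fun y => g y + h y) = g + h := rfl
    rw [h2, this]; rfl
  rw [Finset.sum_congr rfl this, Finset.sum_add_distrib]
  ring

theorem jamisonA_smul (n : ℕ) (c : ℝ) {g : S → ℝ} (hg : Continuous g) (x : S) :
    jamisonA U n (fun y => c * g y) x = c * jamisonA U n g x := by
  unfold jamisonA
  have : ∀ k ∈ Finset.range n, U^[k+1] (fun y => c * g y) x = c * U^[k+1] g x := by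
    intro k _
    have := jamison_iter_smul U hUcont hUsmul (k+1) c hg
    have h2 : (fun y => c * g y) = c • g := by funext y; simp
    rw [h2, this]; rfl
  rw [Finset.sum_congr rfl this, ← Finset.mul_sum]
  ring

theorem jamisonA_shift (n : ℕ) {g : S → ℝ} (x : S) :
    jamisonA U n (U g) x - jamisonA U n g x
      = (n:ℝ)⁻¹ * (U^[n+1] g x - U^[1] g x) := by
  unfold jamisonA
  have h1 : ∀ k ∈ Finset.range n, U^[k+1] (U g) x = U^[k+1+1] g x := by
    intro k _
    rw [Function.iterate_succ_apply U (k+1) g]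
  rw [Finset.sum_congr rfl h1, ← mul_sub, ← Finset.sum_sub_distrib]
  congr 1
  exact Finset.sum_range_sub (fun k => U^[k+1] g x) n

end JamisonAvg

/-- Jamison's theorem: on a compact metric space, if for every continuous `f` the Cesàro
averages `(1/n) ∑_{k=1}^n Uᵏf` of the dual of a Feller Markov operator converge pointwise to
a constant, then for every continuous `f` this family of Cesàro averages is equicontinuous,
i.e. `P` satisfies the Cesàro e-property. -/
theorem stmt10 {S : Type*} [MetricSpace S] [CompactSpace S]
    (U : (S → ℝ) → (S → ℝ))
    (hUcont : ∀ f : S → ℝ, Continuous f → Continuous (U f))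
    (hUadd : ∀ f g : S → ℝ, Continuous f → Continuous g → U (f + g) = U f + U g)
    (hUsmul : ∀ (c : ℝ) (f : S → ℝ), Continuous f → U (c • f) = c • U f)
    (hUpos : ∀ f : S → ℝ, Continuous f → (∀ x, 0 ≤ f x) → ∀ x, 0 ≤ U f x)
    (hU1 : U (fun _ => 1) = fun _ => 1)
    (hconv : ∀ f : S → ℝ, Continuous f → ∃ c : ℝ, ∀ x : S,
      Tendsto (fun n : ℕ => (n : ℝ)⁻¹ * ∑ k ∈ Finset.range n, U^[k + 1] f x)
        atTop (𝓝 c))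
    (f : S → ℝ) (hf : Continuous f) :
    Equicontinuous
      (fun (n : ℕ) (x : S) => (n : ℝ)⁻¹ * ∑ k ∈ Finset.range n, U^[k + 1] f x) := by
  classical
  rcases isEmpty_or_nonempty S with hS | hS
  · intro z; exact isEmptyElim z
  show Equicontinuous fun (n : ℕ) (x : S) => jamisonA U n f x
  obtain ⟨c, hc⟩ := hconv f hf
  have hc' : ∀ x, Tendsto (fun n : ℕ => jamisonA U n f x) atTop (𝓝 c) := hc
  have hbnd : ∀ g : S → ℝ, Continuous g → ∃ C : ℝ, 0 ≤ C ∧ ∀ x, |g x| ≤ C := by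
    intro g hg
    obtain ⟨C, hC⟩ := (isCompact_range hg.abs).bddAbove
    have hC' : ∀ x, |g x| ≤ C := fun x => hC ⟨x, rfl⟩
    exact ⟨C, (abs_nonneg _).trans (hC' (Classical.arbitrary S)), hC'⟩
  obtain ⟨Cf, hCf0, hCf⟩ := hbnd f hf
  have hAc : ∀ (n : ℕ) (g : S → ℝ), Continuous g → Continuous (jamisonA U n g) :=
    fun n g hg => jamisonA_cont U hUcont hUadd hUsmul hUpos hU1 n hg
  -- KEY: uniform convergence of the Cesàro averages to c
  have key : ∀ ε > (0:ℝ), ∃ N, ∀ n ≥ N, ∀ x, |jamisonA U n f x - c| < ε := by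
    by_contra hcon
    push_neg at hcon
    obtain ⟨ε, hε, hbad⟩ := hcon
    set P : ℕ → Prop := fun n => ∃ x, ε ≤ |jamisonA U n f x - c| with hP
    have hfreq : ∃ᶠ n in atTop, P n := Filter.frequently_atTop.mpr fun N => by
      obtain ⟨n, hn, x, hx⟩ := hbad N; exact ⟨n, hn, ⟨x, hx⟩⟩
    haveI hne : (atTop ⊓ Filter.principal {n | P n}).NeBot :=
      Filter.frequently_iff_neBot.mp hfreq
    set UF : Ultrafilter ℕ := Ultrafilter.of (atTop ⊓ Filter.principal {n | P n}) with hUF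
    have hUFle : (UF : Filter ℕ) ≤ atTop := (Ultrafilter.of_le _).trans inf_le_left
    have hUFP : {n | P n} ∈ UF :=
      Filter.le_principal_iff.mp ((Ultrafilter.of_le _).trans inf_le_right)
    set xw : ℕ → S := fun n => if h : P n then h.choose else Classical.arbitrary S with hxw
    have hxwP : ∀ n, P n → ε ≤ |jamisonA U n f (xw n) - c| := by
      intro n h
      simp only [hxw, dif_pos h]
      exact h.choose_spec
    -- ultrafilter limits exist
    have exlim : ∀ g : S → ℝ, Continuous g →
        ∃ l, Tendsto (fun n => jamisonA U n g (xw n)) (UF : Filter ℕ) (𝓝 l) := by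
      intro g hg
      obtain ⟨Cg, hCg0, hCg⟩ := hbnd g hg
      have hmem : ∀ n, jamisonA U n g (xw n) ∈ Set.Icc (-Cg) Cg := fun n =>
        abs_le.mp (jamisonA_bound U hUcont hUadd hUsmul hUpos hU1 n hg hCg0 hCg (xw n))
      have hle : ↑(UF.map (fun n => jamisonA U n g (xw n)))
          ≤ Filter.principal (Set.Icc (-Cg) Cg) := by
        rw [Filter.le_principal_iff, Ultrafilter.coe_map, Filter.mem_map]
        exact Filter.univ_mem' hmem
      obtain ⟨l, _, hl⟩ := isCompact_Icc.ultrafilter_le_nhds (UF.map _) hle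
      refine ⟨l, ?_⟩
      have hl' : Filter.map (fun n => jamisonA U n g (xw n)) (UF : Filter ℕ) ≤ 𝓝 l := by
        rw [← Ultrafilter.coe_map]; exact hl
      exact hl' 
    set Lam : (S → ℝ) → ℝ :=
      fun g => limUnder (UF : Filter ℕ) (fun n => jamisonA U n g (xw n)) with hLamdef
    have hLam : ∀ g : S → ℝ, Continuous g →
        Tendsto (fun n => jamisonA U n g (xw n)) (UF : Filter ℕ) (𝓝 (Lam g)) := by
      intro g hg
      obtain ⟨l, hl⟩ := exlim g hg
      have hLg : Lam g = l := hl.limUnder_eq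
      rwa [hLg]
    -- functional properties
    have Ladd : ∀ g h : S → ℝ, Continuous g → Continuous h →
        Lam (fun x => g x + h x) = Lam g + Lam h := by
      intro g h hg hh
      refine tendsto_nhds_unique (hLam _ (hg.add hh)) ?_
      have h1 := (hLam g hg).add (hLam h hh)
      apply h1.congr
      intro n
      exact (jamisonA_add U hUcont hUadd hUsmul hUpos hU1 n hg hh (xw n)).symm
    have Lmono : ∀ g h : S → ℝ, Continuous g → Continuous h →
        (∀ x, g x ≤ h x) → Lam g ≤ Lam h := by
      intro g h hg hh hle
      exact le_of_tendsto_of_tendsto' (hLam g hg) (hLam h hh)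
        (fun n => jamisonA_mono U hUcont hUadd hUsmul hUpos hU1 n hg hh hle (xw n))
    have Lconst : ∀ r : ℝ, Lam (fun _ => r) = r := by
      intro r
      refine tendsto_nhds_unique (hLam _ continuous_const) ?_
      have h1 : ∀ᶠ n in (UF : Filter ℕ), r = jamisonA U n (fun _ => r) (xw n) := by
        have hn1 : ∀ᶠ n in (UF : Filter ℕ), 1 ≤ n := hUFle (Filter.eventually_ge_atTop 1)
        filter_upwards [hn1] with n hn
        exact (jamisonA_const U hUcont hUadd hUsmul hUpos hU1 n hn r (xw n)).symm
      exact Filter.Tendsto.congr' h1 tendsto_const_nhds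
    have Lsmul : ∀ (r : ℝ) (g : S → ℝ), Continuous g →
        Lam (fun x => r * g x) = r * Lam g := by
      intro r g hg
      refine tendsto_nhds_unique (hLam _ (continuous_const.mul hg)) ?_
      have h1 := (hLam g hg).const_mul r
      apply h1.congr
      intro n
      exact (jamisonA_smul U hUcont hUadd hUsmul hUpos hU1 n r hg (xw n)).symm
    have LU : ∀ g : S → ℝ, Continuous g → Lam (U g) = Lam g := by
      intro g hg
      obtain ⟨Cg, hCg0, hCg⟩ := hbnd g hg
      have hdiff : Tendsto (fun n => jamisonA U n (U g) (xw n) - jamisonA U n g (xw n))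
          (UF : Filter ℕ) (𝓝 0) := by
        refine squeeze_zero_norm (a := fun n : ℕ => (n:ℝ)⁻¹ * (2 * Cg)) (fun n => ?_) ?_
        · rw [Real.norm_eq_abs, jamisonA_shift U hUcont hUadd hUsmul hUpos hU1 n (xw n),
            abs_mul, abs_of_nonneg (by positivity : (0:ℝ) ≤ (n:ℝ)⁻¹)]
          refine mul_le_mul_of_nonneg_left ?_ (by positivity)
          have b1 := abs_le.mp
            (jamison_iter_bound U hUcont hUadd hUsmul hUpos hU1 (n+1) hg hCg (xw n))
          have b2 := abs_le.mp
            (jamison_iter_bound U hUcont hUadd hUsmul hUpos hU1 1 hg hCg (xw n))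
          rw [abs_le]
          constructor <;> nlinarith [b1.1, b1.2, b2.1, b2.2]
        · have hz : Tendsto (fun n : ℕ => (n:ℝ)⁻¹ * (2 * Cg)) atTop (𝓝 0) := by
            have := tendsto_inv_atTop_nhds_zero_nat.mul_const (2 * Cg)
            simpa using this
          exact hz.mono_left hUFle
      refine tendsto_nhds_unique (hLam _ (hUcont g hg)) ?_
      have h2 := (hLam g hg).add hdiff
      rw [add_zero] at h2
      apply h2.congr
      intro n
      ring
    have Liter : ∀ k : ℕ, Lam (U^[k+1] f) = Lam f := by
      intro k
      induction k with
      | zero => simpa using LU f hf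
      | succ k ih =>
          rw [Function.iterate_succ_apply' U (k+1) f,
            LU _ (jamison_iter_cont U hUcont (k+1) hf)]
          exact ih
    have Lsum : ∀ (s : Finset ℕ) (F : ℕ → S → ℝ), (∀ k, Continuous (F k)) →
        Lam (fun x => ∑ k ∈ s, F k x) = ∑ k ∈ s, Lam (F k) := by
      intro s F hF
      induction s using Finset.induction_on with
      | empty => simpa using Lconst 0
      | @insert a s ha ih =>
          have hcsum : Continuous fun x => ∑ k ∈ s, F k x :=
            continuous_finset_sum _ fun k _ => hF k
          calc Lam (fun x => ∑ k ∈ insert a s, F k x)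
              = Lam (fun x => F a x + ∑ k ∈ s, F k x) := by
                congr 1; funext x; rw [Finset.sum_insert ha]
            _ = Lam (F a) + Lam (fun x => ∑ k ∈ s, F k x) :=
                Ladd (F a) (fun x => ∑ k ∈ s, F k x) (hF a) hcsum
            _ = Lam (F a) + ∑ k ∈ s, Lam (F k) := by rw [ih]
            _ = ∑ k ∈ insert a s, Lam (F k) := by rw [Finset.sum_insert ha]
    have LA : ∀ N : ℕ, 1 ≤ N → Lam (jamisonA U N f) = Lam f := by
      intro N hN
      have h1 : jamisonA U N f
          = fun x => (N:ℝ)⁻¹ * ∑ k ∈ Finset.range N, U^[k+1] f x := rfl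
      have h2 : Lam (fun x => (N:ℝ)⁻¹ * ∑ k ∈ Finset.range N, U^[k+1] f x)
          = (N:ℝ)⁻¹ * Lam (fun x => ∑ k ∈ Finset.range N, U^[k+1] f x) :=
        Lsmul _ _ (continuous_finset_sum _ fun k _ => jamison_iter_cont U hUcont (k+1) hf)
      have h3 : Lam (fun x => ∑ k ∈ Finset.range N, U^[k+1] f x)
          = ∑ k ∈ Finset.range N, Lam (U^[k+1] f) :=
        Lsum (Finset.range N) (fun k => U^[k+1] f)
          (fun k => jamison_iter_cont U hUcont (k+1) hf)
      have h4 : ∑ k ∈ Finset.range N, Lam (U^[k+1] f) = (N:ℝ) * Lam f := by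
        rw [Finset.sum_congr rfl (fun k _ => Liter k), Finset.sum_const,
          Finset.card_range, nsmul_eq_mul]
      have hNne : (N:ℝ) ≠ 0 := by
        have : (0:ℝ) < N := by exact_mod_cast hN
        linarith
      rw [h1, h2, h3, h4]
      field_simp
    -- sigma-smoothness of Lam
    set gseq : ℕ → S → ℝ := fun N x => |jamisonA U N f x - c| with hgseq
    have hgc : ∀ N, Continuous (gseq N) := fun N => ((hAc N f hf).sub continuous_const).abs
    have hg0 : ∀ N x, 0 ≤ gseq N x := fun N x => abs_nonneg _
    have hgK : ∀ N x, gseq N x ≤ Cf + |c| := by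
      intro N x
      have hb := abs_le.mp (jamisonA_bound U hUcont hUadd hUsmul hUpos hU1 N hf hCf0 hCf x)
      have : gseq N x = |jamisonA U N f x - c| := rfl
      rw [this, abs_le]
      have hcb := le_abs_self c
      have hcb' := neg_abs_le c
      constructor <;> nlinarith [hb.1, hb.2]
    have hpt : ∀ x, Tendsto (fun N => gseq N x) atTop (𝓝 0) := by
      intro x
      have h1 : Tendsto (fun N => jamisonA U N f x - c) atTop (𝓝 0) := by
        have := (hc' x).sub (tendsto_const_nhds (x := c))
        simpa using this
      have h2 := h1.abs
      simpa using h2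
    have hsig := sigma_smooth Lam Ladd Lmono Lconst gseq hgc hg0 (Cf + |c|) hgK hpt
    -- |Lam f - c| <= Lam (gseq N) for N >= 1
    have hLbound : ∀ N : ℕ, 1 ≤ N → |Lam f - c| ≤ Lam (gseq N) := by
      intro N hN
      have hcontd : Continuous (fun x => jamisonA U N f x - c) :=
        (hAc N f hf).sub continuous_const
      have e1 : Lam (fun x => (jamisonA U N f x - c) + c)
          = Lam (fun x => jamisonA U N f x - c) + c := by
        rw [Ladd _ _ hcontd continuous_const, Lconst c]
      have e2 : (fun x => (jamisonA U N f x - c) + c) = jamisonA U N f := by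
        funext x; ring
      rw [e2] at e1
      have e3 : Lam (fun x => jamisonA U N f x - c) = Lam f - c := by
        have := LA N hN
        linarith [e1]
      have hup : Lam (fun x => jamisonA U N f x - c) ≤ Lam (gseq N) :=
        Lmono _ _ hcontd (hgc N) (fun x => le_abs_self _)
      have hnegeq : Lam (fun x => -(jamisonA U N f x - c))
          = -Lam (fun x => jamisonA U N f x - c) := by
        have h0 := Ladd (fun x => jamisonA U N f x - c)
          (fun x => -(jamisonA U N f x - c)) hcontd hcontd.neg
        have hzero : (fun x => (jamisonA U N f x - c) + -(jamisonA U N f x - c))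
            = fun _ : S => (0:ℝ) := by funext x; ring
        rw [hzero, Lconst 0] at h0
        linarith
      have hdn : Lam (fun x => -(jamisonA U N f x - c)) ≤ Lam (gseq N) :=
        Lmono _ _ hcontd.neg (hgc N) (fun x => neg_le_abs _)
      rw [hnegeq, e3] at hdn
      rw [e3] at hup
      rw [abs_le]
      constructor <;> linarith
    have hLfc : Lam f = c := by
      have h1 : |Lam f - c| ≤ 0 :=
        ge_of_tendsto hsig (Filter.eventually_atTop.mpr ⟨1, fun N hN => hLbound N hN⟩)
      have h2 := abs_nonneg (Lam f - c)
      have h3 : |Lam f - c| = 0 := le_antisymm h1 h2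
      have h4 := abs_eq_zero.mp h3
      linarith
    have hepsle : ε ≤ |Lam f - c| := by
      have htd : Tendsto (fun n => |jamisonA U n f (xw n) - c|) (UF : Filter ℕ)
          (𝓝 |Lam f - c|) := ((hLam f hf).sub tendsto_const_nhds).abs
      have hev : ∀ᶠ n in (UF : Filter ℕ), ε ≤ |jamisonA U n f (xw n) - c| := by
        filter_upwards [hUFP] with n hn
        exact hxwP n hn
      exact ge_of_tendsto htd hev
    rw [hLfc, sub_self, abs_zero] at hepsle
    linarith
  -- equicontinuity from uniform convergence
  intro z
  rw [Metric.equicontinuousAt_iff_right]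
  intro ε hε
  obtain ⟨N, hN⟩ := key (ε/3) (by positivity)
  have hfin : ∀ᶠ x in 𝓝 z, ∀ n ∈ Finset.range N,
      dist (jamisonA U n f z) (jamisonA U n f x) < ε := by
    rw [Filter.eventually_all_finset]
    intro n _
    have hcont : ContinuousAt (jamisonA U n f) z := (hAc n f hf).continuousAt
    have h2 := (Metric.tendsto_nhds.mp hcont.tendsto) ε hε
    filter_upwards [h2] with x hx
    rw [dist_comm]; exact hx
  filter_upwards [hfin] with x hx
  intro n
  by_cases hn : n < N
  · exact hx n (Finset.mem_range.mpr hn)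
  · push_neg at hn
    have h1 := abs_lt.mp (hN n hn x)
    have h2 := abs_lt.mp (hN n hn z)
    rw [Real.dist_eq, abs_lt]
    constructor <;> nlinarith [h1.1, h1.2, h2.1, h2.2]
end

section
/- Let S ⊆ ℓ^∞ be the set consisting of the zero sequence together with all sequences having a single nonzero entry equal to i/k_n in position k_nⁱ (for i ∈ {1,…,k_n} and n ∈ ℕ), where (k_n) is an increasing sequence of primes. With T : S → S mapping the zero sequence and the point with entry 1 in position k_n^{k_n} to zero, and mapping the point with entry i/k_n in position k_nⁱ to the point with entry (i+1)/k_n in position k_n^{i+1} (for 1 ≤ i ≤ k_n − 1), the pushforward Markov operator P = T_* is asymptotically stable with invariant measure δ₀, but does not satisfy the Cesàro e-property at 0: for a continuous f : S → [0,∞) with f(0) = 0 and f(x) = 1 whenever ‖x‖_∞ ≥ 1/2, one has (1/k_n)∑_{i=1}^{k_n} Uⁱf(x_n) − (1/k_n)∑_{i=1}^{k_n} Uⁱf(0) ≥ 1/2, where x_n is the point with entry 1/k_n in position k_n. -/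
open MeasureTheory Filter Topology

/-! Every point of `S` reaches `0` after finitely many steps of `T`, and `0` is fixed. Hence, by
dominated convergence, `∫ g d(Tᵐ_* μ) = ∫ g ∘ Tᵐ dμ → g 0` for every bounded measurable `g`, and
testing an invariant `μ` against indicators shows `μ = δ₀`. The Cesàro e-property fails because
the orbit of `xₙ` climbs through the points with entries `2/kₙ, …, kₙ/kₙ`, about half of which
have norm at least `1/2`, while the orbit of `0` stays where `f` vanishes. -/

theorem iterate_eq_of_iterate_eq_fixedPoint {X : Type*} {T : X → X} {z : X} (hz : T z = z)
    {x : X} {M m : ℕ} (hM : T^[M] x = z) (hMm : M ≤ m) : T^[m] x = z := by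
  rw [← Nat.sub_add_cancel hMm, Function.iterate_add_apply, hM, Function.iterate_fixed hz]

section ReachesFixedPoint

variable {X : Type*} [MeasurableSpace X] {T : X → X} {z : X}

theorem tendsto_integral_map_iterate_of_reaches (hT : Measurable T) (hz : T z = z)
    (hreach : ∀ x, ∃ m, T^[m] x = z) (μ : Measure X) [IsProbabilityMeasure μ]
    {g : X → ℝ} (hg : Measurable g) {C : ℝ} (hC : ∀ x, |g x| ≤ C) :
    Tendsto (fun m => ∫ x, g x ∂μ.map T^[m]) atTop (𝓝 (g z)) := by
  simp_rw [integral_map (hT.iterate _).aemeasurable hg.aestronglyMeasurable]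
  rw [show g z = ∫ _, g z ∂μ by simp]
  refine tendsto_integral_of_dominated_convergence (fun _ => C)
    (fun m => (hg.comp (hT.iterate m)).aestronglyMeasurable) (integrable_const C)
    (fun m => .of_forall fun x => hC _) (.of_forall fun x => ?_)
  obtain ⟨M, hM⟩ := hreach x
  refine tendsto_const_nhds.congr' ?_
  filter_upwards [eventually_ge_atTop M] with m hm
  rw [iterate_eq_of_iterate_eq_fixedPoint hz hM hm]

theorem eq_dirac_of_map_eq_of_reaches (hT : Measurable T) (hz : T z = z)
    (hreach : ∀ x, ∃ m, T^[m] x = z) (μ : Measure X) [IsProbabilityMeasure μ]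
    (hμ : μ.map T = μ) : μ = Measure.dirac z := by
  ext s hs
  rw [← measureReal_eq_measureReal_iff, ← integral_indicator_one hs, ← integral_indicator_one hs,
    integral_dirac' _ _ (measurable_one.indicator hs).stronglyMeasurable]
  have hconst (m : ℕ) :
      ∫ x, s.indicator (1 : X → ℝ) x ∂μ.map T^[m] = ∫ x, s.indicator (1 : X → ℝ) x ∂μ := by
    rw [(MeasurePreserving.iterate ⟨hT, hμ⟩ m).map_eq]
  refine tendsto_nhds_unique tendsto_const_nhds
    ((tendsto_integral_map_iterate_of_reaches hT hz hreach μ (measurable_one.indicator hs)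
      (C := 1) fun x => ?_).congr hconst)
  by_cases hx : x ∈ s <;> simp [hx]

end ReachesFixedPoint

theorem half_le_sum_range_of_eq_one {k : ℕ} (hk : 2 ≤ k) {a : ℕ → ℝ} (ha : ∀ i, 0 ≤ a i)
    (ha1 : ∀ i, k ≤ 2 * (i + 2) → i + 2 ≤ k → a i = 1) :
    (k : ℝ) / 2 ≤ ∑ i ∈ Finset.range k, a i := by
  set I := Finset.Ico (k / 2 - 1) (k - 1)
  have hcard : k ≤ I.card * 2 := by
    rw [Nat.card_Ico]; omega
  have hI (i : ℕ) (hi : i ∈ I) : k / 2 - 1 ≤ i ∧ i < k - 1 := Finset.mem_Ico.1 hi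
  calc (k : ℝ) / 2 ≤ I.card := by
        rw [div_le_iff₀ two_pos]; exact_mod_cast hcard
    _ = ∑ i ∈ I, a i := by
        rw [Finset.sum_congr rfl fun i hi => ha1 i (by have := hI i hi; omega)
          (by have := hI i hi; omega), Finset.sum_const, nsmul_one]
    _ ≤ ∑ i ∈ Finset.range k, a i :=
        Finset.sum_le_sum_of_subset_of_nonneg
          (fun i hi => Finset.mem_range.2 (by have := hI i hi; omega)) fun i _ _ => ha i

local notation "ℓ∞" => lp (fun _ : ℕ => ℝ) ⊤

section SingleEntryOrbits

variable {k : ℕ → ℕ} {S : Set ℓ∞} {T : S → S}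

theorem coe_iterate_eq_zero
    (hT0 : ∀ x : S, ⇑(x : ℓ∞) = (0 : ℕ → ℝ) → ⇑(T x : ℓ∞) = (0 : ℕ → ℝ))
    {x : S} (hx : ⇑(x : ℓ∞) = (0 : ℕ → ℝ)) (m : ℕ) : ⇑(T^[m] x : ℓ∞) = (0 : ℕ → ℝ) := by
  induction m with
  | zero => exact hx
  | succ m ih => rw [Function.iterate_succ_apply']; exact hT0 _ ih

theorem coe_iterate_eq_single
    (hTstep : ∀ x : S, ∀ n i : ℕ, 1 ≤ i → i ≤ k n - 1 →
      ⇑(x : ℓ∞) = (Pi.single (k n ^ i) ((i : ℝ) / (k n : ℝ)) : ℕ → ℝ) →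
      ⇑(T x : ℓ∞) = (Pi.single (k n ^ (i + 1)) (((i : ℝ) + 1) / (k n : ℝ)) : ℕ → ℝ))
    {n i : ℕ} (hi : 1 ≤ i) {x : S}
    (hx : ⇑(x : ℓ∞) = (Pi.single (k n ^ i) ((i : ℝ) / (k n : ℝ)) : ℕ → ℝ)) :
    ∀ j, i + j ≤ k n →
      ⇑(T^[j] x : ℓ∞) = (Pi.single (k n ^ (i + j)) (((i + j : ℕ) : ℝ) / (k n : ℝ)) : ℕ → ℝ)
  | 0, _ => hx
  | j + 1, hj => by
    rw [Function.iterate_succ_apply',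
      hTstep _ n (i + j) (by omega) (by omega) (coe_iterate_eq_single hTstep hi hx j (by omega))]
    push_cast
    ring_nf

theorem exists_coe_iterate_eq_zero
    (hS : S = {x : ℓ∞ | ⇑x = (0 : ℕ → ℝ) ∨
      ∃ n i : ℕ, 1 ≤ i ∧ i ≤ k n ∧ ⇑x = (Pi.single (k n ^ i) ((i : ℝ) / (k n : ℝ)) : ℕ → ℝ)})
    (hTtop : ∀ x : S, ∀ n : ℕ,
      ⇑(x : ℓ∞) = (Pi.single (k n ^ k n) (1 : ℝ) : ℕ → ℝ) → ⇑(T x : ℓ∞) = (0 : ℕ → ℝ))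
    (hTstep : ∀ x : S, ∀ n i : ℕ, 1 ≤ i → i ≤ k n - 1 →
      ⇑(x : ℓ∞) = (Pi.single (k n ^ i) ((i : ℝ) / (k n : ℝ)) : ℕ → ℝ) →
      ⇑(T x : ℓ∞) = (Pi.single (k n ^ (i + 1)) (((i : ℝ) + 1) / (k n : ℝ)) : ℕ → ℝ))
    (x : S) : ∃ m, ⇑(T^[m] x : ℓ∞) = (0 : ℕ → ℝ) := by
  obtain hx | ⟨n, i, hi, hik, hx⟩ := hS.le x.2
  · exact ⟨0, hx⟩
  refine ⟨k n - i + 1, ?_⟩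
  rw [Function.iterate_succ_apply']
  refine hTtop _ n ?_
  rw [coe_iterate_eq_single hTstep hi hx _ (by omega), Nat.add_sub_cancel' hik,
    div_self (by exact_mod_cast (by omega : k n ≠ 0))]

end SingleEntryOrbits

theorem stmt11_general
    (k : ℕ → ℕ) (hkprime : ∀ n, (k n).Prime)
    (Sset : Set (lp (fun _ : ℕ => ℝ) ⊤))
    (hS : Sset = {x : lp (fun _ : ℕ => ℝ) ⊤ | ⇑x = (0 : ℕ → ℝ) ∨
      ∃ n i : ℕ, 1 ≤ i ∧ i ≤ k n ∧ ⇑x = (Pi.single (k n ^ i) ((i : ℝ) / (k n : ℝ)) : ℕ → ℝ)})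
    [MeasurableSpace ↥Sset] [BorelSpace ↥Sset]
    (T : ↥Sset → ↥Sset) (hTm : Measurable T)
    (hT0 : ∀ x : ↥Sset, ⇑(x : lp (fun _ : ℕ => ℝ) ⊤) = (0 : ℕ → ℝ) →
      ⇑(T x : lp (fun _ : ℕ => ℝ) ⊤) = (0 : ℕ → ℝ))
    (hTtop : ∀ x : ↥Sset, ∀ n : ℕ,
      ⇑(x : lp (fun _ : ℕ => ℝ) ⊤) = (Pi.single (k n ^ k n) (1 : ℝ) : ℕ → ℝ) →
      ⇑(T x : lp (fun _ : ℕ => ℝ) ⊤) = (0 : ℕ → ℝ))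
    (hTstep : ∀ x : ↥Sset, ∀ n i : ℕ, 1 ≤ i → i ≤ k n - 1 →
      ⇑(x : lp (fun _ : ℕ => ℝ) ⊤) = (Pi.single (k n ^ i) ((i : ℝ) / (k n : ℝ)) : ℕ → ℝ) →
      ⇑(T x : lp (fun _ : ℕ => ℝ) ⊤) =
        (Pi.single (k n ^ (i + 1)) (((i : ℝ) + 1) / (k n : ℝ)) : ℕ → ℝ))
    (f : ↥Sset → ℝ) (hfpos : ∀ x, 0 ≤ f x)
    (hf0 : ∀ x : ↥Sset, ⇑(x : lp (fun _ : ℕ => ℝ) ⊤) = (0 : ℕ → ℝ) → f x = 0)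
    (hf1 : ∀ x : ↥Sset, (1 / 2 : ℝ) ≤ ‖(x : lp (fun _ : ℕ => ℝ) ⊤)‖ → f x = 1) :
    -- asymptotic stability: δ₀ is invariant, unique, and attracts all iterates weakly
    (∀ z : ↥Sset, ⇑(z : lp (fun _ : ℕ => ℝ) ⊤) = (0 : ℕ → ℝ) →
      (Measure.map T (Measure.dirac z) = Measure.dirac z) ∧
      (∀ μ : Measure ↥Sset, IsProbabilityMeasure μ → Measure.map T μ = μ →
        μ = Measure.dirac z) ∧
      (∀ μ : Measure ↥Sset, IsProbabilityMeasure μ →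
        ∀ g : ↥Sset → ℝ, Continuous g → (∃ C, ∀ x, |g x| ≤ C) →
          Tendsto (fun m => ∫ x, g x ∂ (Measure.map (T^[m]) μ)) atTop (𝓝 (g z)))) ∧
    -- failure of the Cesàro e-property at 0, witnessed by the points xₙ with entry
    -- 1/kₙ in position kₙ
    (∀ n : ℕ, ∀ x z : ↥Sset,
      ⇑(x : lp (fun _ : ℕ => ℝ) ⊤) = (Pi.single (k n) ((k n : ℝ)⁻¹) : ℕ → ℝ) →
      ⇑(z : lp (fun _ : ℕ => ℝ) ⊤) = (0 : ℕ → ℝ) →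
      (1 / 2 : ℝ) ≤ (k n : ℝ)⁻¹ * ∑ i ∈ Finset.range (k n), f (T^[i + 1] x)
        - (k n : ℝ)⁻¹ * ∑ i ∈ Finset.range (k n), f (T^[i + 1] z)) := by
  have eq_of_coe_eq_zero {x y : Sset} (hx : ⇑(x : ℓ∞) = 0) (hy : ⇑(y : ℓ∞) = 0) : x = y :=
    Subtype.ext (lp.ext (hx.trans hy.symm))
  refine ⟨fun z hz => ?_, fun n x z hx hz => ?_⟩
  · have hfix : T z = z := eq_of_coe_eq_zero (hT0 z hz) hz
    have hreach (x : Sset) : ∃ m, T^[m] x = z :=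
      (exists_coe_iterate_eq_zero hS hTtop hTstep x).imp fun _ hm => eq_of_coe_eq_zero hm hz
    exact ⟨by rw [Measure.map_dirac' hTm, hfix],
      fun μ _ hμ => eq_dirac_of_map_eq_of_reaches hTm hfix hreach μ hμ,
      fun μ _ g hg ⟨_, hC⟩ => tendsto_integral_map_iterate_of_reaches hTm hfix hreach μ
        hg.measurable hC⟩
  · have hk : 2 ≤ k n := (hkprime n).two_le
    have hx1 : ⇑(x : ℓ∞) = Pi.single (k n ^ 1) (((1 : ℕ) : ℝ) / k n) := by simpa using hx
    have hsum_z : ∑ i ∈ Finset.range (k n), f (T^[i + 1] z) = 0 :=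
      Finset.sum_eq_zero fun i _ => hf0 _ (coe_iterate_eq_zero hT0 hz _)
    have hsum_x : (k n : ℝ) / 2 ≤ ∑ i ∈ Finset.range (k n), f (T^[i + 1] x) := by
      refine half_le_sum_range_of_eq_one hk (fun _ => hfpos _) fun i hi hik => hf1 _ ?_
      have hentry := lp.norm_apply_le_norm ENNReal.top_ne_zero (T^[i + 1] x : ℓ∞)
        (k n ^ (1 + (i + 1)))
      rw [coe_iterate_eq_single hTstep le_rfl hx1 _ (by omega), Pi.single_eq_same,
        Real.norm_of_nonneg (by positivity)] at hentry
      refine le_trans ?_ hentry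
      rw [div_le_div_iff₀ two_pos (by positivity), one_mul]
      exact_mod_cast (by omega : k n ≤ (1 + (i + 1)) * 2)
    rw [hsum_z, mul_zero, sub_zero, le_inv_mul_iff₀ (by positivity)]
    linarith

/-- Example 2 of the paper: the subset `S` of `ℓ^∞` consisting of the zero sequence together
with the points having a single nonzero entry `i/k_n` in position `k_nⁱ` (for `1 ≤ i ≤ k_n`,
`(k_n)` an increasing sequence of primes), with `T` cycling these points as described, yields
an asymptotically stable pushforward Markov operator which fails the Cesàro e-property at `0`:
for any continuous `f ≥ 0` with `f(0) = 0` and `f(x) = 1` for `‖x‖_∞ ≥ 1/2`, the Cesàro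
averages at the points `x_n` (entry `1/k_n` in position `k_n`) differ from those at `0` by at
least `1/2`. -/
theorem stmt11
    (k : ℕ → ℕ) (hkmono : StrictMono k) (hkprime : ∀ n, (k n).Prime)
    (Sset : Set (lp (fun _ : ℕ => ℝ) ⊤))
    (hS : Sset = {x : lp (fun _ : ℕ => ℝ) ⊤ | ⇑x = (0 : ℕ → ℝ) ∨
      ∃ n i : ℕ, 1 ≤ i ∧ i ≤ k n ∧ ⇑x = (Pi.single (k n ^ i) ((i : ℝ) / (k n : ℝ)) : ℕ → ℝ)})
    [MeasurableSpace ↥Sset] [BorelSpace ↥Sset]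
    (T : ↥Sset → ↥Sset) (hTm : Measurable T)
    (hT0 : ∀ x : ↥Sset, ⇑(x : lp (fun _ : ℕ => ℝ) ⊤) = (0 : ℕ → ℝ) →
      ⇑(T x : lp (fun _ : ℕ => ℝ) ⊤) = (0 : ℕ → ℝ))
    (hTtop : ∀ x : ↥Sset, ∀ n : ℕ,
      ⇑(x : lp (fun _ : ℕ => ℝ) ⊤) = (Pi.single (k n ^ k n) (1 : ℝ) : ℕ → ℝ) →
      ⇑(T x : lp (fun _ : ℕ => ℝ) ⊤) = (0 : ℕ → ℝ))
    (hTstep : ∀ x : ↥Sset, ∀ n i : ℕ, 1 ≤ i → i ≤ k n - 1 →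
      ⇑(x : lp (fun _ : ℕ => ℝ) ⊤) = (Pi.single (k n ^ i) ((i : ℝ) / (k n : ℝ)) : ℕ → ℝ) →
      ⇑(T x : lp (fun _ : ℕ => ℝ) ⊤) =
        (Pi.single (k n ^ (i + 1)) (((i : ℝ) + 1) / (k n : ℝ)) : ℕ → ℝ))
    (f : ↥Sset → ℝ) (hfc : Continuous f) (hfpos : ∀ x, 0 ≤ f x)
    (hf0 : ∀ x : ↥Sset, ⇑(x : lp (fun _ : ℕ => ℝ) ⊤) = (0 : ℕ → ℝ) → f x = 0)
    (hf1 : ∀ x : ↥Sset, (1 / 2 : ℝ) ≤ ‖(x : lp (fun _ : ℕ => ℝ) ⊤)‖ → f x = 1) :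
    -- asymptotic stability: δ₀ is invariant, unique, and attracts all iterates weakly
    (∀ z : ↥Sset, ⇑(z : lp (fun _ : ℕ => ℝ) ⊤) = (0 : ℕ → ℝ) →
      (Measure.map T (Measure.dirac z) = Measure.dirac z) ∧
      (∀ μ : Measure ↥Sset, IsProbabilityMeasure μ → Measure.map T μ = μ →
        μ = Measure.dirac z) ∧
      (∀ μ : Measure ↥Sset, IsProbabilityMeasure μ →
        ∀ g : ↥Sset → ℝ, Continuous g → (∃ C, ∀ x, |g x| ≤ C) →
          Tendsto (fun m => ∫ x, g x ∂ (Measure.map (T^[m]) μ)) atTop (𝓝 (g z)))) ∧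
    -- failure of the Cesàro e-property at 0, witnessed by the points xₙ with entry
    -- 1/kₙ in position kₙ
    (∀ n : ℕ, ∀ x z : ↥Sset,
      ⇑(x : lp (fun _ : ℕ => ℝ) ⊤) = (Pi.single (k n) ((k n : ℝ)⁻¹) : ℕ → ℝ) →
      ⇑(z : lp (fun _ : ℕ => ℝ) ⊤) = (0 : ℕ → ℝ) →
      (1 / 2 : ℝ) ≤ (k n : ℝ)⁻¹ * ∑ i ∈ Finset.range (k n), f (T^[i + 1] x)
        - (k n : ℝ)⁻¹ * ∑ i ∈ Finset.range (k n), f (T^[i + 1] z)) :=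
  stmt11_general k hkprime Sset hS T hTm hT0 hTtop hTstep f hfpos hf0 hf1
end

section
/- Let U be a positive linear operator on B_b(S) with U1 = 1 that is the dual of a Markov operator P, let μ* be an invariant probability measure of P, and let α ∈ (0,1), k ∈ ℕ with 2(1−α)^k‖f‖_∞ < ε for a given bounded Borel f and ε > 0. If ν₁,…,ν_k, ν'₁,…,ν'_k are probability measures with limsup_{n→∞} |⟨f, Pⁿν_i⟩ − ⟨f, Pⁿν'_i⟩| ≤ ε for each i, and if μ, μ' are probability measures admitting decompositions Pᴺμ = ∑_{i=1}^k α(1−α)^{i−1} P^{m_i}ν_i + (1−α)^k ρ and Pᴺμ' = ∑_{i=1}^k α(1−α)^{i−1} P^{m_i}ν'_i + (1−α)^k ρ' for some N, m_i ∈ ℕ and probability measures ρ, ρ', then limsup_{n→∞} |⟨f, Pⁿμ⟩ − ⟨f, Pⁿμ'⟩| ≤ ε(α + α(1−α) + ⋯ + α(1−α)^{k−1}) + 2(1−α)^k‖f‖_∞ < 2ε. -/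
/-!
For `n ≥ N` the decompositions propagate: `Pⁿμ` is the mixture of the `P^{n-N+mᵢ}νᵢ` with weights
`α(1-α)^i` and of `P^{n-N}ρ` with weight `(1-α)^k`, and likewise for `μ'`. Pairing the components,
the difference of the integrals of `f` is at most the weighted sum of the differences for the
pairs `(νᵢ, ν'ᵢ)`, each asymptotically at most `ε`, plus `(1-α)^k` times the trivial bound `2C`
for the pair `(ρ, ρ')`. The weights `α(1-α)^i` sum to `1 - (1-α)^k`, which gives the strict bound.
-/

open MeasureTheory Filter Topology
open scoped ENNReal

theorem limsup_le_sum_mul_add {β ι : Type*} [Fintype ι] {l : Filter β} {u : β → ℝ}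
    {a : ι → β → ℝ} {w : ι → ℝ} {ε c : ℝ} (hu : IsCoboundedUnder (· ≤ ·) l u)
    (hw : ∀ i, 0 ≤ w i) (ha : ∀ i, ∀ y > ε, ∀ᶠ x in l, a i x < y)
    (h : ∀ᶠ x in l, u x ≤ ∑ i, w i * a i x + c) :
    limsup u l ≤ ε * ∑ i, w i + c := by
  have hle : ∀ δ > 0, limsup u l ≤ (ε + δ) * ∑ i, w i + c := by
    intro δ hδ
    have hall : ∀ᶠ x in l, ∀ i, a i x < ε + δ :=
      eventually_all.2 fun i => ha i _ (by linarith)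
    refine limsup_le_of_le hu ?_
    filter_upwards [h, hall] with x hx hax
    calc u x ≤ ∑ i, w i * a i x + c := hx
      _ ≤ ∑ i, w i * (ε + δ) + c := by
        gcongr with i
        · exact hw i
        · exact (hax i).le
      _ = (ε + δ) * ∑ i, w i + c := by rw [← Finset.sum_mul, mul_comm]
  have hcont : Tendsto (fun δ : ℝ => (ε + δ) * ∑ i, w i + c) (𝓝[>] 0)
      (𝓝 (ε * ∑ i, w i + c)) := by
    refine tendsto_nhdsWithin_of_tendsto_nhds ?_
    exact (by fun_prop : Continuous fun δ : ℝ => (ε + δ) * ∑ i, w i + c).tendsto' 0 _ (by simp)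
  exact ge_of_tendsto hcont (eventually_nhdsWithin_of_forall hle)

section BoundedIntegrand

variable {S : Type*} [MeasurableSpace S] {f : S → ℝ} {C : ℝ}

theorem integrable_of_abs_le (hf : Measurable f) (hfC : ∀ x, |f x| ≤ C) (σ : Measure S)
    [IsFiniteMeasure σ] : Integrable f σ :=
  .of_bound hf.aestronglyMeasurable C (.of_forall fun x => (Real.norm_eq_abs _).trans_le (hfC x))

theorem abs_integral_sub_integral_le (hfC : ∀ x, |f x| ≤ C) (σ σ' : Measure S)
    [IsProbabilityMeasure σ] [IsProbabilityMeasure σ'] :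
    |∫ x, f x ∂σ - ∫ x, f x ∂σ'| ≤ 2 * C := by
  have hbound : ∀ (τ : Measure S) [IsProbabilityMeasure τ], |∫ x, f x ∂τ| ≤ C := fun τ _ => by
    simpa using norm_integral_le_of_norm_le_const (μ := τ)
      (.of_forall fun x => (Real.norm_eq_abs _).trans_le (hfC x))
  linarith [abs_sub (∫ x, f x ∂σ) (∫ x, f x ∂σ'), hbound σ, hbound σ']

end BoundedIntegrand

section Mixture

variable {S ι : Type*} [MeasurableSpace S] [Fintype ι]

noncomputable def mixture (w : ι → ℝ) (τ : ι → Measure S) (w' : ℝ) (π : Measure S) :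
    Measure S :=
  ∑ i, ENNReal.ofReal (w i) • τ i + ENNReal.ofReal w' • π

theorem iterate_mixture {P : Measure S → Measure S} (hadd : ∀ μ ν, P (μ + ν) = P μ + P ν)
    (hsmul : ∀ (c : ℝ≥0∞) μ, P (c • μ) = c • P μ) (n : ℕ) (w : ι → ℝ) (τ : ι → Measure S)
    (w' : ℝ) (π : Measure S) :
    P^[n] (mixture w τ w' π) = mixture w (fun i => P^[n] (τ i)) w' (P^[n] π) := by
  let L : Measure S →ₗ[ℝ≥0∞] Measure S := ⟨⟨P, hadd⟩, hsmul⟩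
  have hL : P^[n] = ⇑(L ^ n) := (Module.End.coe_pow L n).symm
  simp only [mixture, hL, map_add, map_sum, map_smul]

theorem integral_mixture {f : S → ℝ} {w : ι → ℝ} {τ : ι → Measure S} {w' : ℝ} {π : Measure S}
    (hw : ∀ i, 0 ≤ w i) (hw' : 0 ≤ w') (hτ : ∀ i, Integrable f (τ i)) (hπ : Integrable f π) :
    ∫ x, f x ∂mixture w τ w' π = ∑ i, w i * ∫ x, f x ∂τ i + w' * ∫ x, f x ∂π := by
  have hτw : ∀ i ∈ Finset.univ, Integrable f (ENNReal.ofReal (w i) • τ i) :=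
    fun i _ => (hτ i).smul_measure ENNReal.ofReal_ne_top
  rw [mixture, integral_add_measure (integrable_finsetSum_measure.2 hτw)
    (hπ.smul_measure ENNReal.ofReal_ne_top), integral_finsetSum_measure hτw]
  simp only [integral_smul_measure, smul_eq_mul, ENNReal.toReal_ofReal (hw _),
    ENNReal.toReal_ofReal hw']

theorem abs_integral_mixture_sub_le {f : S → ℝ} {C : ℝ} (hf : Measurable f)
    (hfC : ∀ x, |f x| ≤ C) {w : ι → ℝ} {w' : ℝ} (hw : ∀ i, 0 ≤ w i) (hw' : 0 ≤ w')
    (τ τ' : ι → Measure S) (π π' : Measure S) [∀ i, IsProbabilityMeasure (τ i)]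
    [∀ i, IsProbabilityMeasure (τ' i)] [IsProbabilityMeasure π] [IsProbabilityMeasure π'] :
    |∫ x, f x ∂mixture w τ w' π - ∫ x, f x ∂mixture w τ' w' π'| ≤
      ∑ i, w i * |∫ x, f x ∂τ i - ∫ x, f x ∂τ' i| + 2 * w' * C := by
  have hint := integrable_of_abs_le hf hfC
  rw [integral_mixture hw hw' (fun i => hint _) (hint _),
    integral_mixture hw hw' (fun i => hint _) (hint _)]
  have hsplit : ∑ i, w i * ∫ x, f x ∂τ i + w' * ∫ x, f x ∂π
      - (∑ i, w i * ∫ x, f x ∂τ' i + w' * ∫ x, f x ∂π') =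
      ∑ i, w i * (∫ x, f x ∂τ i - ∫ x, f x ∂τ' i) + w' * (∫ x, f x ∂π - ∫ x, f x ∂π') := by
    simp only [mul_sub, Finset.sum_sub_distrib]
    ring
  rw [hsplit]
  calc _ ≤ |∑ i, w i * (∫ x, f x ∂τ i - ∫ x, f x ∂τ' i)|
          + |w' * (∫ x, f x ∂π - ∫ x, f x ∂π')| := abs_add_le _ _
    _ ≤ ∑ i, |w i * (∫ x, f x ∂τ i - ∫ x, f x ∂τ' i)|
          + w' * (2 * C) := by
        rw [abs_mul, abs_of_nonneg hw']
        gcongr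
        · exact Finset.abs_sum_le_sum_abs _ _
        · exact abs_integral_sub_integral_le hfC π π'
    _ = ∑ i, w i * |∫ x, f x ∂τ i - ∫ x, f x ∂τ' i| + 2 * w' * C := by
        simp only [abs_mul, abs_of_nonneg (hw _)]
        ring

end Mixture

theorem isProbabilityMeasure_iterate {S : Type*} [MeasurableSpace S] {P : Measure S → Measure S}
    (hmass : ∀ μ : Measure S, P μ Set.univ = μ Set.univ) (n : ℕ) (σ : Measure S)
    [IsProbabilityMeasure σ] : IsProbabilityMeasure (P^[n] σ) := by
  induction n with
  | zero => assumption
  | succ n ih => exact ⟨by rw [Function.iterate_succ_apply', hmass, measure_univ]⟩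

theorem sum_range_mul_one_sub_pow (α : ℝ) (k : ℕ) :
    ∑ i ∈ Finset.range k, α * (1 - α) ^ i = 1 - (1 - α) ^ k := by
  have h := geom_sum_mul (1 - α) k
  rw [← Finset.mul_sum]
  linarith

theorem stmt15_general {S : Type*} [MeasurableSpace S]
    (P : Measure S → Measure S)
    (hadd : ∀ μ ν : Measure S, P (μ + ν) = P μ + P ν)
    (hsmul : ∀ (c : ℝ≥0∞) (μ : Measure S), P (c • μ) = c • P μ)
    (hmass : ∀ μ : Measure S, P μ Set.univ = μ Set.univ)
    (f : S → ℝ) (hfm : Measurable f) (C : ℝ) (hfC : ∀ x, |f x| ≤ C)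
    (α ε : ℝ) (hα0 : 0 < α) (hα1 : α < 1) (hε : 0 < ε)
    (k : ℕ) (hkε : 2 * (1 - α) ^ k * C < ε)
    (ν ν' : Fin k → Measure S)
    (hν : ∀ i, IsProbabilityMeasure (ν i)) (hν' : ∀ i, IsProbabilityMeasure (ν' i))
    (hlim : ∀ i : Fin k,
      Filter.limsup (fun n : ℕ => |∫ x, f x ∂ (P^[n] (ν i)) - ∫ x, f x ∂ (P^[n] (ν' i))|)
        atTop ≤ ε)
    (μ μ' : Measure S)
    (N : ℕ) (m : Fin k → ℕ) (ρ ρ' : Measure S)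
    (hρ : IsProbabilityMeasure ρ) (hρ' : IsProbabilityMeasure ρ')
    (hdec : P^[N] μ =
      (∑ i : Fin k, ENNReal.ofReal (α * (1 - α) ^ (i : ℕ)) • P^[m i] (ν i))
        + ENNReal.ofReal ((1 - α) ^ k) • ρ)
    (hdec' : P^[N] μ' =
      (∑ i : Fin k, ENNReal.ofReal (α * (1 - α) ^ (i : ℕ)) • P^[m i] (ν' i))
        + ENNReal.ofReal ((1 - α) ^ k) • ρ') :
    Filter.limsup (fun n : ℕ => |∫ x, f x ∂ (P^[n] μ) - ∫ x, f x ∂ (P^[n] μ')|) atTop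
        ≤ ε * (∑ i ∈ Finset.range k, α * (1 - α) ^ i) + 2 * (1 - α) ^ k * C ∧
      ε * (∑ i ∈ Finset.range k, α * (1 - α) ^ i) + 2 * (1 - α) ^ k * C < 2 * ε := by
  have hq : 0 ≤ (1 - α) ^ k := pow_nonneg (by linarith) k
  have hw : ∀ i : Fin k, 0 ≤ α * (1 - α) ^ (i : ℕ) :=
    fun i => mul_nonneg hα0.le (pow_nonneg (by linarith) _)
  have hprob := isProbabilityMeasure_iterate hmass
  have hsplit : ∀ n, |∫ x, f x ∂P^[n + N] μ - ∫ x, f x ∂P^[n + N] μ'| ≤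
      ∑ i : Fin k, α * (1 - α) ^ (i : ℕ) *
        |∫ x, f x ∂P^[n + m i] (ν i) - ∫ x, f x ∂P^[n + m i] (ν' i)| + 2 * (1 - α) ^ k * C := by
    intro n
    simp only [Function.iterate_add_apply, hdec, hdec']
    rw [← mixture, ← mixture, iterate_mixture hadd hsmul, iterate_mixture hadd hsmul]
    exact abs_integral_mixture_sub_le hfm hfC hw hq _ _ _ _
  refine ⟨?_, ?_⟩
  · rw [← limsup_nat_add _ N, ← Fin.sum_univ_eq_sum_range (fun i => α * (1 - α) ^ i)]
    refine limsup_le_sum_mul_add (isCoboundedUnder_le_of_le atTop fun _ => abs_nonneg _) hw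
      (fun i y hy => ?_) (.of_forall hsplit)
    have hbdd := isBoundedUnder_of (f := atTop) ⟨2 * C, fun n =>
      abs_integral_sub_integral_le hfC (P^[n] (ν i)) (P^[n] (ν' i))⟩
    exact (tendsto_add_atTop_nat (m i)).eventually
      (eventually_lt_of_limsup_lt ((hlim i).trans_lt hy) hbdd)
  · rw [sum_range_mul_one_sub_pow]
    nlinarith

/-- The concluding estimate of the main theorem: given the coupling-type decompositions of
`Pᴺμ` and `Pᴺμ'`, the asymptotic difference of `⟨f, Pⁿμ⟩` and `⟨f, Pⁿμ'⟩` is bounded by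
`ε(α + α(1-α) + ⋯ + α(1-α)^{k-1}) + 2(1-α)^k‖f‖_∞ < 2ε`. -/
theorem stmt15 {S : Type*} [MetricSpace S] [PolishSpace S] [MeasurableSpace S] [BorelSpace S]
    (P : Measure S → Measure S)
    (hadd : ∀ μ ν : Measure S, P (μ + ν) = P μ + P ν)
    (hsmul : ∀ (c : ℝ≥0∞) (μ : Measure S), P (c • μ) = c • P μ)
    (hmass : ∀ μ : Measure S, P μ Set.univ = μ Set.univ)
    (U : (S → ℝ) → (S → ℝ))
    (hU : ∀ (g : S → ℝ) (C : ℝ), Measurable g → (∀ x, |g x| ≤ C) →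
      Measurable (U g) ∧ ∀ x, |U g x| ≤ C)
    (hUpos : ∀ g : S → ℝ, Measurable g → (∃ C, ∀ x, |g x| ≤ C) → (∀ x, 0 ≤ g x) →
      ∀ x, 0 ≤ U g x)
    (hU1 : U (fun _ => 1) = fun _ => 1)
    (hdual : ∀ g : S → ℝ, Measurable g → (∃ C, ∀ x, |g x| ≤ C) →
      ∀ μ : Measure S, ∫ x, g x ∂ (P μ) = ∫ x, U g x ∂ μ)
    (μstar : Measure S) [IsProbabilityMeasure μstar] (hinv : P μstar = μstar)
    (f : S → ℝ) (hfm : Measurable f) (C : ℝ) (hfC : ∀ x, |f x| ≤ C)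
    (α ε : ℝ) (hα0 : 0 < α) (hα1 : α < 1) (hε : 0 < ε)
    (k : ℕ) (hkε : 2 * (1 - α) ^ k * C < ε)
    (ν ν' : Fin k → Measure S)
    (hν : ∀ i, IsProbabilityMeasure (ν i)) (hν' : ∀ i, IsProbabilityMeasure (ν' i))
    (hlim : ∀ i : Fin k,
      Filter.limsup (fun n : ℕ => |∫ x, f x ∂ (P^[n] (ν i)) - ∫ x, f x ∂ (P^[n] (ν' i))|)
        atTop ≤ ε)
    (μ μ' : Measure S) (hμ : IsProbabilityMeasure μ) (hμ' : IsProbabilityMeasure μ')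
    (N : ℕ) (m : Fin k → ℕ) (ρ ρ' : Measure S)
    (hρ : IsProbabilityMeasure ρ) (hρ' : IsProbabilityMeasure ρ')
    (hdec : P^[N] μ =
      (∑ i : Fin k, ENNReal.ofReal (α * (1 - α) ^ (i : ℕ)) • P^[m i] (ν i))
        + ENNReal.ofReal ((1 - α) ^ k) • ρ)
    (hdec' : P^[N] μ' =
      (∑ i : Fin k, ENNReal.ofReal (α * (1 - α) ^ (i : ℕ)) • P^[m i] (ν' i))
        + ENNReal.ofReal ((1 - α) ^ k) • ρ') :
    Filter.limsup (fun n : ℕ => |∫ x, f x ∂ (P^[n] μ) - ∫ x, f x ∂ (P^[n] μ')|) atTop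
        ≤ ε * (∑ i ∈ Finset.range k, α * (1 - α) ^ i) + 2 * (1 - α) ^ k * C ∧
      ε * (∑ i ∈ Finset.range k, α * (1 - α) ^ i) + 2 * (1 - α) ^ k * C < 2 * ε :=
  stmt15_general P hadd hsmul hmass f hfm C hfC α ε hα0 hα1 hε k hkε ν ν' hν hν' hlim μ μ' N m ρ ρ'
    hρ hρ' hdec hdec'
end
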